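/- arXiv:2505.09588 — 6 statements merged into one kernel-verified Lean document; each statement's English description precedes it below -/
import Mathlib

section
/- Let Q : D → H_t be the canonical quotient map g ↦ g + ker t from D into the completion H_t of D/ker t with inner product induced by t. Then dom(Q*Q) = {g ∈ D : sup{|t(g,h)|² : h ∈ D, ‖h‖ ≤ 1} < ∞}, and t(g,h) = ⟨Q*Q g, h⟩ for all g ∈ dom(Q*Q) and h ∈ D. -/
open Filter Topology RCLike
open scoped ComplexConjugate

noncomputable section

/-- A nonnegative symmetric sesquilinear form on a subspace `D` of `H`. -/
structure NonnegForm (𝕜 : Type*) [RCLike 𝕜] {H : Type*} [NormedAddCommGroup H]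
    [InnerProductSpace 𝕜 H] (D : Submodule 𝕜 H) where
  toFun : D → D → 𝕜
  add_left : ∀ x y z : D, toFun (x + y) z = toFun x z + toFun y z
  smul_left : ∀ (c : 𝕜) (x y : D), toFun (c • x) y = c * toFun x y
  conj_symm : ∀ x y : D, toFun x y = (starRingEnd 𝕜) (toFun y x)
  nonneg : ∀ x : D, 0 ≤ RCLike.re (toFun x x)

variable {𝕜 H K : Type*} [RCLike 𝕜] [NormedAddCommGroup H] [InnerProductSpace 𝕜 H]
  [NormedAddCommGroup K] [InnerProductSpace 𝕜 K] [CompleteSpace H] [CompleteSpace K]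

/-- A partial operator is positive if `⟪x, T x⟫ ≥ 0` on its domain. -/
def IsPositivePMap (T : H →ₗ.[𝕜] H) : Prop :=
  ∀ x : T.domain, 0 ≤ RCLike.re (@inner 𝕜 H _ (x : H) (T x))

/-- `C` is the (unbounded) composition `A ∘ B` of the partial operators `A` and `B`,
with natural domain `{x ∈ dom B : B x ∈ dom A}`. -/
def IsPComp (A : K →ₗ.[𝕜] H) (B : H →ₗ.[𝕜] K) (C : H →ₗ.[𝕜] H) : Prop :=
  (∀ x : H, x ∈ C.domain ↔ ∃ hx : x ∈ B.domain, B ⟨x, hx⟩ ∈ A.domain) ∧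
  ∀ (x : H) (hxC : x ∈ C.domain) (hx : x ∈ B.domain) (hBx : B ⟨x, hx⟩ ∈ A.domain),
    C ⟨x, hxC⟩ = A ⟨B ⟨x, hx⟩, hBx⟩

/-- `R` is the positive self-adjoint square root of `T`, i.e. `R` is positive
self-adjoint and `R ∘ R = T` as partial operators. -/
def IsSqrtOf (R T : H →ₗ.[𝕜] H) : Prop :=
  IsSelfAdjoint R ∧ IsPositivePMap R ∧ IsPComp R R T

/-- The set `D₊` of all `g ∈ D` with `|t(g,h)|² ≤ C‖h‖²` for some `C ≥ 0` and all `h ∈ D`. -/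
def Dplus {D : Submodule 𝕜 H} (t : NonnegForm 𝕜 D) : Set H :=
  {g | ∃ hg : g ∈ D, ∃ C : ℝ, 0 ≤ C ∧ ∀ h : D, ‖t.toFun ⟨g, hg⟩ h‖ ^ 2 ≤ C * ‖(h : H)‖ ^ 2}

/-- The set `D₊₊` of all `g ∈ D` approximable by a sequence from `D₊` converging
to `g` in `H` and in the seminorm of the form `t`. -/
def Dpp {D : Submodule 𝕜 H} (t : NonnegForm 𝕜 D) : Set H :=
  {g | ∃ hg : g ∈ D, ∃ u : ℕ → D, (∀ n, (u n : H) ∈ Dplus t) ∧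
    Tendsto (fun n => (u n : H)) atTop (𝓝 g) ∧
    Tendsto (fun n => RCLike.re (t.toFun (u n - ⟨g, hg⟩) (u n - ⟨g, hg⟩))) atTop (𝓝 0)}

/-- The form `t` is closed. -/
def FormClosed {D : Submodule 𝕜 H} (t : NonnegForm 𝕜 D) : Prop :=
  ∀ (u : ℕ → D) (g : H), Tendsto (fun n => (u n : H)) atTop (𝓝 g) →
    (∀ ε > (0 : ℝ), ∃ N, ∀ n ≥ N, ∀ m ≥ N, RCLike.re (t.toFun (u n - u m) (u n - u m)) < ε) →
    ∃ hg : g ∈ D,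
      Tendsto (fun n => RCLike.re (t.toFun (u n - ⟨g, hg⟩) (u n - ⟨g, hg⟩))) atTop (𝓝 0)

/-- The form `t` is closable. -/
def FormClosable {D : Submodule 𝕜 H} (t : NonnegForm 𝕜 D) : Prop :=
  ∀ u : ℕ → D, Tendsto (fun n => (u n : H)) atTop (𝓝 (0 : H)) →
    (∀ ε > (0 : ℝ), ∃ N, ∀ n ≥ N, ∀ m ≥ N, RCLike.re (t.toFun (u n - u m) (u n - u m)) < ε) →
    Tendsto (fun n => RCLike.re (t.toFun (u n) (u n))) atTop (𝓝 0)

/-- The partial operator `S` represents the form `t`: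
`⟪S g, h⟫ = t (g, h)` for all `g ∈ D ∩ dom S` and `h ∈ D`. -/
def Represents {D : Submodule 𝕜 H} (t : NonnegForm 𝕜 D) (S : H →ₗ.[𝕜] H) : Prop :=
  ∀ (g : H) (hgD : g ∈ D) (hgS : g ∈ S.domain) (h : D),
    @inner 𝕜 H _ (S ⟨g, hgS⟩) (h : H) = t.toFun ⟨g, hgD⟩ h

/-- Basic representation of a form by `Q*Q`, where `Q : D → H_t` is the canonical
quotient map: `dom (Q*Q) = D₊` and `t(g,h) = ⟪Q*Q g, h⟫` for `g ∈ dom (Q*Q)`, `h ∈ D`. -/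
theorem form_represented_by_QstarQ (Q : H →ₗ.[𝕜] K) (t : NonnegForm 𝕜 Q.domain)
    (hdense : Dense (Q.domain : Set H))
    (ht : ∀ g h : Q.domain, @inner 𝕜 K _ (Q g) (Q h) = t.toFun g h)
    (hran : Dense (Set.range fun x : Q.domain => Q x)) :
    (∀ g : Q.domain, (Q g ∈ Q.adjoint.domain ↔ (g : H) ∈ Dplus t)) ∧
      ∀ (g : Q.domain) (hg : Q g ∈ Q.adjoint.domain) (h : Q.domain),
        @inner 𝕜 H _ (Q.adjoint ⟨Q g, hg⟩) (h : H) = t.toFun g h := by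
  constructor
  · intro g
    rw [LinearPMap.mem_adjoint_domain_iff]
    constructor
    · intro hc
      refine ⟨g.2, ?_⟩
      set f : Q.domain →L[𝕜] 𝕜 := ⟨(innerₛₗ 𝕜 (Q g)).comp Q.toFun, hc⟩
      refine ⟨‖f‖ ^ 2, by positivity, fun h => ?_⟩
      have h1 : t.toFun g h = f h := (ht g h).symm
      have := f.le_opNorm h
      calc ‖t.toFun g h‖ ^ 2 = ‖f h‖ ^ 2 := by rw [h1]
        _ ≤ (‖f‖ * ‖h‖) ^ 2 := by
            apply pow_le_pow_left₀ (norm_nonneg _) this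
        _ = ‖f‖ ^ 2 * ‖(h : H)‖ ^ 2 := by
            rw [mul_pow, Submodule.norm_coe]
    · rintro ⟨hg, C, hC0, hC⟩
      have hgg : (⟨(g : H), hg⟩ : Q.domain) = g := rfl
      refine AddMonoidHomClass.continuous_of_bound _ (Real.sqrt C) fun h => ?_
      have h1 : ((innerₛₗ 𝕜 (Q g)).comp Q.toFun) h = t.toFun g h := by
        simpa using ht g h
      rw [h1]
      have h2 := hC h
      rw [hgg] at h2
      have h3 : ‖t.toFun g h‖ ≤ Real.sqrt C * ‖(h : H)‖ := by
        have := Real.sqrt_le_sqrt h2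
        rwa [Real.sqrt_sq (norm_nonneg _), Real.sqrt_mul hC0,
          Real.sqrt_sq (norm_nonneg _)] at this
      simpa using h3
  · intro g hg h
    rw [← ht g h]
    exact (Q.adjoint_isFormalAdjoint hdense) ⟨Q g, hg⟩ h
end
end

section
/- Let T be a densely defined (not necessarily closed) operator such that T*T is self-adjoint. Then dom T = dom(T*T)^{1/2} together with ⟨Tg, Th⟩ = ⟨(T*T)^{1/2}g, (T*T)^{1/2}h⟩ for all g,h ∈ dom T holds if and only if both: (a) every g ∈ dom T admits a sequence (gₙ) ⊂ dom(T*T) with gₙ → g and Tgₙ → Tg; and (b) for any sequence (gₙ) ⊂ dom(T*T) with gₙ → g and T(gₙ−gₘ) → 0, one has g ∈ dom T. -/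
open Filter Topology RCLike
open scoped ComplexConjugate

noncomputable section

variable {𝕜 H K : Type*} [RCLike 𝕜] [NormedAddCommGroup H] [InnerProductSpace 𝕜 H]
  [NormedAddCommGroup K] [InnerProductSpace 𝕜 K] [CompleteSpace H] [CompleteSpace K]

section AuxLemmas

local notation "⟪" x ", " y "⟫" => @inner 𝕜 _ _ x y

variable [CompleteSpace H]

lemma symm_inner' {S : H →ₗ.[𝕜] H} (hS : IsSelfAdjoint S) (x y : S.domain) :
    ⟪(S x : H), (y : H)⟫ = ⟪(x : H), S y⟫ := by
  have h := LinearPMap.adjoint_isFormalAdjoint (T := S) hS.dense_domain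
  rw [LinearPMap.isSelfAdjoint_def.mp hS] at h
  exact h x y

lemma of_adjoint' {S : H →ₗ.[𝕜] H} (hS : IsSelfAdjoint S) {x y : H}
    (hx : x ∈ S.adjoint.domain) (h : S.adjoint ⟨x, hx⟩ = y) :
    ∃ hx' : x ∈ S.domain, S ⟨x, hx'⟩ = y := by
  have hg : (x, y) ∈ S.adjoint.graph := S.adjoint.mem_graph_iff.mpr ⟨⟨x, hx⟩, rfl, h⟩
  rw [LinearPMap.isSelfAdjoint_def.mp hS] at hg
  rcases S.mem_graph_iff.mp hg with ⟨⟨x', hx'⟩, hx1, hx2⟩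
  dsimp at hx1
  subst hx1
  exact ⟨hx', hx2⟩

lemma sa_closed' {S : H →ₗ.[𝕜] H} (hS : IsSelfAdjoint S) {u : ℕ → S.domain} {x y : H}
    (hux : Tendsto (fun n => (u n : H)) atTop (𝓝 x))
    (huy : Tendsto (fun n => (S (u n) : H)) atTop (𝓝 y)) :
    ∃ hx : x ∈ S.domain, S ⟨x, hx⟩ = y := by
  have key : ∀ z : S.domain, ⟪y, (z : H)⟫ = ⟪x, (S z : H)⟫ := by
    intro z
    have h1 : Tendsto (fun n => ⟪(S (u n) : H), (z : H)⟫) atTop (𝓝 ⟪y, (z : H)⟫) :=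
      huy.inner tendsto_const_nhds
    have h2 : Tendsto (fun n => ⟪(u n : H), (S z : H)⟫) atTop (𝓝 ⟪x, (S z : H)⟫) :=
      hux.inner tendsto_const_nhds
    have h3 : (fun n => ⟪(S (u n) : H), (z : H)⟫) = fun n => ⟪(u n : H), (S z : H)⟫ :=
      funext fun n => symm_inner' hS (u n) z
    rw [h3] at h1
    exact tendsto_nhds_unique h1 h2
  have hx' : x ∈ S.adjoint.domain :=
    LinearPMap.mem_adjoint_domain_of_exists x ⟨y, fun z => key z⟩
  exact of_adjoint' hS hx' (LinearPMap.adjoint_apply_eq hS.dense_domain ⟨x, hx'⟩ fun z => key z)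

lemma bnd1' {S : H →ₗ.[𝕜] H} (hpos : ∀ x : S.domain, 0 ≤ re ⟪(x : H), (S x : H)⟫)
    {c : ℝ} (hc : 0 < c) (x : S.domain) :
    c * ‖(x : H)‖ ≤ ‖(S x : H) + (c : 𝕜) • (x : H)‖ := by
  have h1 : re ⟪(x : H), (S x : H) + (c : 𝕜) • (x : H)⟫
      = re ⟪(x : H), (S x : H)⟫ + c * ‖(x : H)‖ ^ 2 := by
    rw [inner_add_right, map_add, inner_smul_right]
    congr 1
    rw [RCLike.re_ofReal_mul, inner_self_eq_norm_sq]
  have h2 : re ⟪(x : H), (S x : H) + (c : 𝕜) • (x : H)⟫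
      ≤ ‖(x : H)‖ * ‖(S x : H) + (c : 𝕜) • (x : H)‖ := re_inner_le_norm _ _
  have h3 := hpos x
  rcases eq_or_lt_of_le (norm_nonneg (x : H)) with h4 | h4
  · rw [← h4, mul_zero]; exact norm_nonneg _
  · nlinarith

lemma bnd2' {S : H →ₗ.[𝕜] H} (hpos : ∀ x : S.domain, 0 ≤ re ⟪(x : H), (S x : H)⟫)
    {c : ℝ} (hc : 0 < c) (u : S.domain) (v : H)
    (h : (S u : H) + (c : 𝕜) • (u : H) = (c : 𝕜) • v) : ‖(u : H)‖ ≤ ‖v‖ := by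
  have h1 := bnd1' hpos hc u
  rw [h, norm_smul] at h1
  simp only [RCLike.norm_ofReal, abs_of_pos hc] at h1
  exact le_of_mul_le_mul_left h1 hc

lemma surj' {S : H →ₗ.[𝕜] H} (hS : IsSelfAdjoint S)
    (hpos : ∀ x : S.domain, 0 ≤ re ⟪(x : H), (S x : H)⟫)
    {c : ℝ} (hc : 0 < c) (y : H) :
    ∃ x : S.domain, (S x : H) + (c : 𝕜) • (x : H) = y := by
  set L : S.domain →ₗ[𝕜] H := S.toFun + (c : 𝕜) • S.domain.subtype with hL
  have hLapp : ∀ x : S.domain, L x = (S x : H) + (c : 𝕜) • (x : H) := fun x => rfl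
  set E : Submodule 𝕜 H := LinearMap.range L with hE
  have hclosed : IsClosed (E : Set H) := by
    apply IsSeqClosed.isClosed
    intro u p hu hup
    choose x hx using hu
    have hcau : CauchySeq fun n => (x n : H) := by
      rw [Metric.cauchySeq_iff]
      intro ε hε
      have hcu : CauchySeq u := hup.cauchySeq
      rcases Metric.cauchySeq_iff.mp hcu (c * ε) (by positivity) with ⟨N, hN⟩
      refine ⟨N, fun m hm n hn => ?_⟩
      have hb := bnd1' hpos hc (x m - x n)
      have heq : (S (x m - x n) : H) + (c : 𝕜) • ((x m - x n : S.domain) : H) = u m - u n := by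
        rw [← hx m, ← hx n, hLapp, hLapp, S.map_sub]
        push_cast
        rw [smul_sub]
        abel
      rw [heq] at hb
      have := hN m hm n hn
      rw [dist_eq_norm] at this ⊢
      push_cast at hb ⊢
      nlinarith
    rcases cauchySeq_tendsto_of_complete hcau with ⟨q, hq⟩
    have hSx : Tendsto (fun n => (S (x n) : H)) atTop (𝓝 (p - (c : 𝕜) • q)) := by
      have : (fun n => (S (x n) : H)) = fun n => u n - (c : 𝕜) • (x n : H) := by
        funext n
        rw [← hx n, hLapp]; abel
      rw [this]
      exact hup.sub (hq.const_smul _)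
    rcases sa_closed' hS hq hSx with ⟨hp, hp2⟩
    exact ⟨⟨q, hp⟩, by rw [hLapp, hp2]; abel⟩
  have horth : Eᗮ = ⊥ := by
    rw [Submodule.eq_bot_iff]
    intro z hz
    have hz' : ∀ x : S.domain, ⟪(S x : H) + (c : 𝕜) • (x : H), z⟫ = 0 := fun x =>
      (Submodule.mem_orthogonal E z).mp hz _ ⟨x, rfl⟩
    have key : ∀ x : S.domain, ⟪-(c : 𝕜) • z, (x : H)⟫ = ⟪z, (S x : H)⟫ := by
      intro x
      have h1 : ⟪(S x : H), z⟫ = -((c : 𝕜) * ⟪(x : H), z⟫) := by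
        have := hz' x
        rw [inner_add_left, inner_smul_left, RCLike.conj_ofReal] at this
        linear_combination this
      have h2 : ⟪z, (S x : H)⟫ = -((c : 𝕜) * ⟪z, (x : H)⟫) := by
        rw [← inner_conj_symm, h1]
        simp [inner_conj_symm, RCLike.conj_ofReal]
      rw [h2, inner_smul_left]
      simp [RCLike.conj_ofReal]
    have hzdom : z ∈ S.adjoint.domain :=
      LinearPMap.mem_adjoint_domain_of_exists z ⟨-(c : 𝕜) • z, fun x => key x⟩
    obtain ⟨hz1, hz2⟩ := of_adjoint' hS hzdom
      (LinearPMap.adjoint_apply_eq hS.dense_domain ⟨z, hzdom⟩ fun x => key x)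
    have hp := hpos ⟨z, hz1⟩
    rw [hz2] at hp
    simp only [inner_smul_right] at hp
    have : re ((-(c : 𝕜)) * ⟪z, z⟫) = -(c * ‖z‖ ^ 2) := by
      rw [← RCLike.ofReal_neg, RCLike.re_ofReal_mul, inner_self_eq_norm_sq]
      ring
    rw [this] at hp
    have : ‖z‖ = 0 := by
      by_contra hne
      have h0 : 0 < ‖z‖ := lt_of_le_of_ne (norm_nonneg z) (Ne.symm hne)
      nlinarith [mul_pos hc (mul_pos h0 h0)]
    exact norm_eq_zero.mp this
  have htop : E = ⊤ := by
    have h1 : E.topologicalClosure = ⊤ := Submodule.topologicalClosure_eq_top_iff.mpr horth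
    have h2 : (E.topologicalClosure : Set H) = (E : Set H) := by
      rw [Submodule.topologicalClosure_coe, hclosed.closure_eq]
    rw [Submodule.eq_top_iff']
    intro w
    have : w ∈ (E.topologicalClosure : Set H) := by rw [h1]; trivial
    rwa [h2] at this
  obtain ⟨x, hx⟩ : y ∈ E := by rw [htop]; trivial
  exact ⟨x, by rw [← hLapp]; exact hx⟩

lemma conv' {S : H →ₗ.[𝕜] H} (hS : IsSelfAdjoint S)
    (hpos : ∀ x : S.domain, 0 ≤ re ⟪(x : H), (S x : H)⟫)
    (y : H) (u : ℕ → S.domain)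
    (hu : ∀ n : ℕ, (S (u n) : H) + (((n : ℝ) + 1 : ℝ) : 𝕜) • (u n : H)
        = (((n : ℝ) + 1 : ℝ) : 𝕜) • y) :
    Tendsto (fun n => (u n : H)) atTop (𝓝 y) := by
  rw [Metric.tendsto_atTop]
  intro ε hε
  obtain ⟨v, hvS, hvy⟩ : ∃ v ∈ (S.domain : Set H), dist y v < ε / 3 := by
    have hd := hS.dense_domain y
    rw [Metric.mem_closure_iff] at hd
    rcases hd (ε / 3) (by linarith) with ⟨v, hv1, hv2⟩
    exact ⟨v, hv1, hv2⟩
  have hw := fun n : ℕ =>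
    surj' hS hpos (c := (n : ℝ) + 1) (by positivity) ((((n : ℝ) + 1 : ℝ) : 𝕜) • v)
  choose w hwn using hw
  have happrox : ∀ n : ℕ, ‖(w n : H) - v‖ ≤ ‖(S ⟨v, hvS⟩ : H)‖ / ((n : ℝ) + 1) := by
    intro n
    have hc : (0 : ℝ) < (n : ℝ) + 1 := by positivity
    set c : ℝ := (n : ℝ) + 1 with hcdef
    set z : S.domain := (c : 𝕜) • ⟨v, hvS⟩ - (c : 𝕜) • w n with hz
    have hz1 : (z : H) = (S (w n) : H) := by
      rw [hz]
      push_cast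
      rw [eq_comm, eq_sub_iff_add_eq]
      exact hwn n
    have heq : (S ⟨(z : H), z.2⟩ : H) + (c : 𝕜) • (z : H) = (c : 𝕜) • (S ⟨v, hvS⟩ : H) := by
      have e0 : (⟨(z : H), z.2⟩ : S.domain) = z := rfl
      rw [e0, hz, S.map_sub, S.map_smul, S.map_smul, hz1]
      exact sub_add_cancel _ _
    have hb := bnd2' hpos hc ⟨(z : H), z.2⟩ (S ⟨v, hvS⟩ : H) heq
    have hznorm : (z : H) = (c : 𝕜) • ((v : H) - (w n : H)) := by
      rw [hz]; push_cast; rw [smul_sub]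
    have : c * ‖(w n : H) - v‖ = ‖(z : H)‖ := by
      rw [hznorm, norm_smul, RCLike.norm_ofReal, abs_of_pos hc, norm_sub_rev]
    rw [le_div_iff₀ hc, mul_comm ‖(w n : H) - v‖ c, this]
    exact hb
  rcases exists_nat_gt (3 * ‖(S ⟨v, hvS⟩ : H)‖ / ε) with ⟨N, hN⟩
  refine ⟨N, fun n hn => ?_⟩
  have hc : (0 : ℝ) < (n : ℝ) + 1 := by positivity
  have hb1 : ‖(u n : H) - (w n : H)‖ ≤ ‖y - v‖ := by
    apply bnd2' hpos hc (u n - w n)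
    have habcd : ∀ a b c' d : H, a - b + (c' - d) = a + c' - (b + d) := fun a b c' d => by abel
    rw [S.map_sub, Submodule.coe_sub, smul_sub, habcd, hu n, hwn n, ← smul_sub]
  have hb2 : ‖(w n : H) - v‖ < ε / 3 := by
    refine lt_of_le_of_lt (happrox n) ?_
    rw [div_lt_iff₀ hε] at hN
    rw [div_lt_div_iff₀ hc (by norm_num : (0:ℝ) < 3)]
    have hn' : (N : ℝ) ≤ (n : ℝ) := Nat.cast_le.mpr hn
    nlinarith [norm_nonneg (S ⟨v, hvS⟩ : H)]
  have d1 : dist ((u n : H)) ((w n : H)) < ε / 3 := by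
    rw [dist_eq_norm]
    calc ‖(u n : H) - (w n : H)‖ ≤ ‖y - v‖ := hb1
      _ = dist y v := (dist_eq_norm _ _).symm
      _ < ε / 3 := hvy
  have d2 : dist ((w n : H)) v < ε / 3 := by rw [dist_eq_norm]; exact hb2
  have d3 : dist v y < ε / 3 := by rw [dist_comm]; exact hvy
  have htri := dist_triangle4 ((u n : H)) ((w n : H)) v y
  linarith

lemma norm_eq_of_inner_self_eq' {a b : H} (h : ⟪a, a⟫ = ⟪b, b⟫) : ‖a‖ = ‖b‖ := by
  have h' : ‖a‖ ^ 2 = ‖b‖ ^ 2 := by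
    rw [← inner_self_eq_norm_sq (𝕜 := 𝕜) a, ← inner_self_eq_norm_sq (𝕜 := 𝕜) b, h]
  have h1 := norm_nonneg a
  have h2 := norm_nonneg b
  nlinarith [sq_nonneg (‖a‖ - ‖b‖), sq_nonneg (‖a‖ + ‖b‖)]

lemma sqrt_core' {T2 R : H →ₗ.[𝕜] H} (hsa : IsSelfAdjoint T2)
    (hRcomp : IsPComp R R T2)
    (hpos : ∀ x : T2.domain, 0 ≤ re ⟪(x : H), (T2 x : H)⟫)
    (g : H) (hgR : g ∈ R.domain) :
    ∃ (u : ℕ → T2.domain) (hu : ∀ n, (u n : H) ∈ R.domain),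
      Tendsto (fun n => (u n : H)) atTop (𝓝 g) ∧
      Tendsto (fun n => (R ⟨(u n : H), hu n⟩ : H)) atTop (𝓝 (R ⟨g, hgR⟩)) := by
  have hsubR : ∀ {x : H}, x ∈ T2.domain → x ∈ R.domain := fun hx => ((hRcomp.1 _).mp hx).choose
  have hx := fun n : ℕ =>
    surj' hsa hpos (c := (n : ℝ) + 1) (by positivity) ((((n : ℝ) + 1 : ℝ) : 𝕜) • g)
  choose u hu using hx
  have hconv : Tendsto (fun n => (u n : H)) atTop (𝓝 g) := conv' hsa hpos g u hu
  have huR : ∀ n, (u n : H) ∈ R.domain := fun n => hsubR (u n).2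
  have hstep : ∀ n : ℕ, ∃ h2 : (R ⟨(u n : H), huR n⟩ : H) ∈ T2.domain,
      (T2 ⟨(R ⟨(u n : H), huR n⟩ : H), h2⟩ : H)
          + (((n : ℝ) + 1 : ℝ) : 𝕜) • (R ⟨(u n : H), huR n⟩ : H)
        = (((n : ℝ) + 1 : ℝ) : 𝕜) • (R ⟨g, hgR⟩ : H) := by
    intro n
    set c : ℝ := (n : ℝ) + 1 with hcdef
    have hRuR : R ⟨(u n : H), huR n⟩ ∈ R.domain := ((hRcomp.1 _).mp (u n).2).choose_spec
    have hT2val : (T2 (u n) : H) = R ⟨R ⟨(u n : H), huR n⟩, hRuR⟩ :=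
      hRcomp.2 _ (u n).2 (huR n) hRuR
    have hSeq : (T2 (u n) : H) = (c : 𝕜) • g - (c : 𝕜) • ((u n : H)) := by
      rw [eq_sub_iff_add_eq]
      exact hu n
    have hmem1 : (c : 𝕜) • g - (c : 𝕜) • ((u n : H)) ∈ R.domain :=
      R.domain.sub_mem (R.domain.smul_mem _ hgR) (R.domain.smul_mem _ (huR n))
    have hmem2 : (R ⟨R ⟨(u n : H), huR n⟩, hRuR⟩ : H) ∈ R.domain := by
      rw [← hT2val, hSeq]; exact hmem1
    have h2 : (R ⟨(u n : H), huR n⟩ : H) ∈ T2.domain := (hRcomp.1 _).mpr ⟨hRuR, hmem2⟩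
    refine ⟨h2, ?_⟩
    have hT2Ru : (T2 ⟨(R ⟨(u n : H), huR n⟩ : H), h2⟩ : H)
        = R ⟨(R ⟨R ⟨(u n : H), huR n⟩, hRuR⟩ : H), hmem2⟩ := hRcomp.2 _ h2 hRuR hmem2
    have e1 : (⟨(R ⟨R ⟨(u n : H), huR n⟩, hRuR⟩ : H), hmem2⟩ : R.domain)
        = (c : 𝕜) • (⟨g, hgR⟩ : R.domain) - (c : 𝕜) • (⟨(u n : H), huR n⟩ : R.domain) := by
      apply Subtype.ext
      push_cast
      rw [← hT2val, hSeq]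
    rw [hT2Ru, e1, R.map_sub, R.map_smul, R.map_smul]
    exact sub_add_cancel _ _
  choose h2 heq using hstep
  have hRconv : Tendsto (fun n => (R ⟨(u n : H), huR n⟩ : H)) atTop (𝓝 (R ⟨g, hgR⟩)) :=
    conv' hsa hpos (R ⟨g, hgR⟩) (fun n => ⟨(R ⟨(u n : H), huR n⟩ : H), h2 n⟩) heq
  exact ⟨u, huR, hconv, hRconv⟩

end AuxLemmas

/-- For a densely defined `T` with `T*T` self-adjoint: `dom T = dom (T*T)^{1/2}` with
`⟪T g, T h⟫ = ⟪(T*T)^{1/2} g, (T*T)^{1/2} h⟫` on `dom T` iff (a) every `g ∈ dom T` admits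
a sequence in `dom (T*T)` with `gₙ → g`, `T gₙ → T g`, and (b) every sequence in
`dom (T*T)` with `gₙ → g` and `T(gₙ - gₘ) → 0` has `g ∈ dom T`. -/
theorem TstarT_selfadjoint_characterization (T : H →ₗ.[𝕜] H)
    (hdense : Dense (T.domain : Set H)) (T2 : H →ₗ.[𝕜] H)
    (hT2 : IsPComp T.adjoint T T2) (hsa : IsSelfAdjoint T2)
    (R : H →ₗ.[𝕜] H) (hR : IsSqrtOf R T2) :
    ((∀ x : H, x ∈ T.domain ↔ x ∈ R.domain) ∧
      ∀ (g h : H) (hgT : g ∈ T.domain) (hhT : h ∈ T.domain)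
        (hgR : g ∈ R.domain) (hhR : h ∈ R.domain),
        @inner 𝕜 H _ (T ⟨g, hgT⟩) (T ⟨h, hhT⟩) =
          @inner 𝕜 H _ (R ⟨g, hgR⟩) (R ⟨h, hhR⟩)) ↔
    ((∀ (g : H) (hg : g ∈ T.domain),
        ∃ (u : ℕ → T2.domain) (hu : ∀ n, (u n : H) ∈ T.domain),
          Tendsto (fun n => (u n : H)) atTop (𝓝 g) ∧
          Tendsto (fun n => T ⟨u n, hu n⟩) atTop (𝓝 (T ⟨g, hg⟩))) ∧
      ∀ (u : ℕ → T2.domain) (hu : ∀ n, (u n : H) ∈ T.domain) (g : H),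
        Tendsto (fun n => (u n : H)) atTop (𝓝 g) →
        (∀ ε > (0 : ℝ), ∃ N, ∀ n ≥ N, ∀ m ≥ N,
          ‖T ⟨u n, hu n⟩ - T ⟨u m, hu m⟩‖ < ε) →
        g ∈ T.domain) := by
  obtain ⟨hRsa, hRpos, hRcomp⟩ := hR
  have hT2subT : ∀ {x : H}, x ∈ T2.domain → x ∈ T.domain := fun hx => ((hT2.1 _).mp hx).choose
  have hT2subR : ∀ {x : H}, x ∈ T2.domain → x ∈ R.domain := fun hx => ((hRcomp.1 _).mp hx).choose
  have hpos : ∀ x : T2.domain, 0 ≤ RCLike.re (@inner 𝕜 H _ (x : H) (T2 x)) := by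
    intro x
    have hxR : (x : H) ∈ R.domain := hT2subR x.2
    have hRx : R ⟨(x : H), hxR⟩ ∈ R.domain := ((hRcomp.1 _).mp x.2).choose_spec
    have hval : (T2 x : H) = R ⟨(R ⟨(x : H), hxR⟩ : H), hRx⟩ := hRcomp.2 _ x.2 hxR hRx
    have h1 : RCLike.re (@inner 𝕜 H _ (x : H) (T2 x))
        = RCLike.re (@inner 𝕜 H _ (R ⟨(x : H), hxR⟩ : H) (R ⟨(x : H), hxR⟩ : H)) := by
      rw [hval, inner_re_symm]
      exact congrArg RCLike.re (symm_inner' hRsa ⟨(R ⟨(x : H), hxR⟩ : H), hRx⟩ ⟨(x : H), hxR⟩)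
    rw [h1]
    exact inner_self_nonneg
  have key : ∀ (x y : H) (hx2 : x ∈ T2.domain) (hy2 : y ∈ T2.domain)
      (hxT : x ∈ T.domain) (hyT : y ∈ T.domain) (hxR : x ∈ R.domain) (hyR : y ∈ R.domain),
      @inner 𝕜 H _ (T ⟨x, hxT⟩) (T ⟨y, hyT⟩) = @inner 𝕜 H _ (R ⟨x, hxR⟩) (R ⟨y, hyR⟩) := by
    intro x y hx2 hy2 hxT hyT hxR hyR
    have hTx : T ⟨x, hxT⟩ ∈ T.adjoint.domain := ((hT2.1 x).mp hx2).choose_spec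
    have h1 : T2 ⟨x, hx2⟩ = T.adjoint ⟨T ⟨x, hxT⟩, hTx⟩ := hT2.2 x hx2 hxT hTx
    have h2 := LinearPMap.adjoint_isFormalAdjoint hdense ⟨T ⟨x, hxT⟩, hTx⟩ ⟨y, hyT⟩
    have hRx : R ⟨x, hxR⟩ ∈ R.domain := ((hRcomp.1 x).mp hx2).choose_spec
    have h3 : T2 ⟨x, hx2⟩ = R ⟨(R ⟨x, hxR⟩ : H), hRx⟩ := hRcomp.2 x hx2 hxR hRx
    have h4 := symm_inner' hRsa ⟨(R ⟨x, hxR⟩ : H), hRx⟩ ⟨y, hyR⟩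
    calc @inner 𝕜 H _ (T ⟨x, hxT⟩ : H) (T ⟨y, hyT⟩ : H)
        = @inner 𝕜 H _ (T.adjoint ⟨T ⟨x, hxT⟩, hTx⟩ : H) y := h2.symm
      _ = @inner 𝕜 H _ (T2 ⟨x, hx2⟩ : H) y := by rw [h1]
      _ = @inner 𝕜 H _ (R ⟨(R ⟨x, hxR⟩ : H), hRx⟩ : H) y := by rw [h3]
      _ = @inner 𝕜 H _ (R ⟨x, hxR⟩ : H) (R ⟨y, hyR⟩ : H) := h4
  have nkey : ∀ (x : H) (hx2 : x ∈ T2.domain) (hxT : x ∈ T.domain) (hxR : x ∈ R.domain),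
      ‖(T ⟨x, hxT⟩ : H)‖ = ‖(R ⟨x, hxR⟩ : H)‖ := fun x hx2 hxT hxR =>
    norm_eq_of_inner_self_eq' (key x x hx2 hx2 hxT hxT hxR hxR)
  have ndiff : ∀ (u v : T2.domain) (huT : (u : H) ∈ T.domain) (hvT : (v : H) ∈ T.domain)
      (huR : (u : H) ∈ R.domain) (hvR : (v : H) ∈ R.domain),
      ‖(T ⟨(u : H), huT⟩ : H) - T ⟨(v : H), hvT⟩‖
        = ‖(R ⟨(u : H), huR⟩ : H) - R ⟨(v : H), hvR⟩‖ := by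
    intro u v huT hvT huR hvR
    have hsub2 : ((u : H) - (v : H)) ∈ T2.domain := T2.domain.sub_mem u.2 v.2
    have hsubT : ((u : H) - (v : H)) ∈ T.domain := T.domain.sub_mem huT hvT
    have hsubR : ((u : H) - (v : H)) ∈ R.domain := R.domain.sub_mem huR hvR
    have e1 : T ⟨(u : H) - (v : H), hsubT⟩ = T ⟨(u : H), huT⟩ - T ⟨(v : H), hvT⟩ :=
      T.map_sub ⟨(u : H), huT⟩ ⟨(v : H), hvT⟩
    have e2 : R ⟨(u : H) - (v : H), hsubR⟩ = R ⟨(u : H), huR⟩ - R ⟨(v : H), hvR⟩ :=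
      R.map_sub ⟨(u : H), huR⟩ ⟨(v : H), hvR⟩
    rw [← e1, ← e2]
    exact nkey _ hsub2 hsubT hsubR
  constructor
  · rintro ⟨hdomTR, hinner⟩
    have hnormTR : ∀ (x : H) (hxT : x ∈ T.domain) (hxR : x ∈ R.domain),
        ‖(T ⟨x, hxT⟩ : H)‖ = ‖(R ⟨x, hxR⟩ : H)‖ := fun x hxT hxR =>
      norm_eq_of_inner_self_eq' (hinner x x hxT hxT hxR hxR)
    constructor
    · intro g hgT
      have hgR : g ∈ R.domain := (hdomTR g).mp hgT
      obtain ⟨u, huR, hconv, hRconv⟩ := sqrt_core' hsa hRcomp hpos g hgR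
      have huT : ∀ n, (u n : H) ∈ T.domain := fun n => hT2subT (u n).2
      refine ⟨u, huT, hconv, ?_⟩
      rw [tendsto_iff_norm_sub_tendsto_zero]
      have hEq : (fun n => ‖(T ⟨(u n : H), huT n⟩ : H) - T ⟨g, hgT⟩‖)
          = fun n => ‖(R ⟨(u n : H), huR n⟩ : H) - R ⟨g, hgR⟩‖ := by
        funext n
        have hsubT : ((u n : H) - g) ∈ T.domain := T.domain.sub_mem (huT n) hgT
        have hsubR : ((u n : H) - g) ∈ R.domain := R.domain.sub_mem (huR n) hgR
        have e1 : T ⟨(u n : H) - g, hsubT⟩ = T ⟨(u n : H), huT n⟩ - T ⟨g, hgT⟩ :=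
          T.map_sub ⟨(u n : H), huT n⟩ ⟨g, hgT⟩
        have e2 : R ⟨(u n : H) - g, hsubR⟩ = R ⟨(u n : H), huR n⟩ - R ⟨g, hgR⟩ :=
          R.map_sub ⟨(u n : H), huR n⟩ ⟨g, hgR⟩
        rw [← e1, ← e2]
        exact hnormTR _ hsubT hsubR
      rw [hEq]
      have h0 : Tendsto (fun n => (R ⟨(u n : H), huR n⟩ : H) - R ⟨g, hgR⟩) atTop (𝓝 0) := by
        simpa using hRconv.sub (tendsto_const_nhds (x := (R ⟨g, hgR⟩ : H)))
      simpa using h0.norm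
    · intro u hu g hg hcau
      have huR : ∀ n, (u n : H) ∈ R.domain := fun n => hT2subR (u n).2
      have hcauR : CauchySeq (fun n => (R ⟨(u n : H), huR n⟩ : H)) := by
        rw [Metric.cauchySeq_iff]
        intro ε hε
        rcases hcau ε hε with ⟨N, hN⟩
        refine ⟨N, fun m hm n hn => ?_⟩
        rw [dist_eq_norm, ← ndiff (u m) (u n) (hu m) (hu n) (huR m) (huR n)]
        exact hN m hm n hn
      rcases cauchySeq_tendsto_of_complete hcauR with ⟨z, hz⟩
      obtain ⟨hgR, -⟩ := sa_closed' hRsa (u := fun n => ⟨(u n : H), huR n⟩) hg hz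
      exact (hdomTR g).mpr hgR
  · rintro ⟨ha, hb⟩
    have hdomRT : ∀ g : H, g ∈ R.domain → g ∈ T.domain := by
      intro g hgR
      obtain ⟨u, huR, hconv, hRconv⟩ := sqrt_core' hsa hRcomp hpos g hgR
      have huT : ∀ n, (u n : H) ∈ T.domain := fun n => hT2subT (u n).2
      apply hb u huT g hconv
      intro ε hε
      rcases Metric.cauchySeq_iff.mp hRconv.cauchySeq ε hε with ⟨N, hN⟩
      refine ⟨N, fun n hn m hm => ?_⟩
      rw [ndiff (u n) (u m) (huT n) (huT m) (huR n) (huR m), ← dist_eq_norm]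
      exact hN n hn m hm
    have hdomTRdir : ∀ g : H, g ∈ T.domain → g ∈ R.domain := by
      intro g hgT
      obtain ⟨u, huT, hconv, hTconv⟩ := ha g hgT
      have huR : ∀ n, (u n : H) ∈ R.domain := fun n => hT2subR (u n).2
      have hcauR : CauchySeq (fun n => (R ⟨(u n : H), huR n⟩ : H)) := by
        rw [Metric.cauchySeq_iff]
        intro ε hε
        rcases Metric.cauchySeq_iff.mp hTconv.cauchySeq ε hε with ⟨N, hN⟩
        refine ⟨N, fun m hm n hn => ?_⟩
        rw [dist_eq_norm, ← ndiff (u m) (u n) (huT m) (huT n) (huR m) (huR n), ← dist_eq_norm]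
        exact hN m hm n hn
      rcases cauchySeq_tendsto_of_complete hcauR with ⟨z, hz⟩
      obtain ⟨hgR, -⟩ := sa_closed' hRsa (u := fun n => ⟨(u n : H), huR n⟩) hconv hz
      exact hgR
    have hRlim : ∀ (u : ℕ → T2.domain) (huT : ∀ n, (u n : H) ∈ T.domain)
        (huR : ∀ n, (u n : H) ∈ R.domain) (g L : H) (hgR : g ∈ R.domain),
        Tendsto (fun n => (u n : H)) atTop (𝓝 g) →
        Tendsto (fun n => (T ⟨(u n : H), huT n⟩ : H)) atTop (𝓝 L) →
        Tendsto (fun n => (R ⟨(u n : H), huR n⟩ : H)) atTop (𝓝 (R ⟨g, hgR⟩)) := by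
      intro u huT huR g L hgR hconv hTconv
      have hcauR : CauchySeq (fun n => (R ⟨(u n : H), huR n⟩ : H)) := by
        rw [Metric.cauchySeq_iff]
        intro ε hε
        rcases Metric.cauchySeq_iff.mp hTconv.cauchySeq ε hε with ⟨N, hN⟩
        refine ⟨N, fun m hm n hn => ?_⟩
        rw [dist_eq_norm, ← ndiff (u m) (u n) (huT m) (huT n) (huR m) (huR n), ← dist_eq_norm]
        exact hN m hm n hn
      rcases cauchySeq_tendsto_of_complete hcauR with ⟨z, hz⟩
      obtain ⟨hgR', heq'⟩ := sa_closed' hRsa (u := fun n => ⟨(u n : H), huR n⟩) hconv hz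
      have hzeq : (R ⟨g, hgR⟩ : H) = z := heq'
      rw [hzeq]
      exact hz
    refine ⟨fun g => ⟨hdomTRdir g, hdomRT g⟩, ?_⟩
    intro g h hgT hhT hgR hhR
    obtain ⟨u, huT, hgconv, hTgconv⟩ := ha g hgT
    obtain ⟨v, hvT, hhconv, hThconv⟩ := ha h hhT
    have huR : ∀ n, (u n : H) ∈ R.domain := fun n => hT2subR (u n).2
    have hvR : ∀ n, (v n : H) ∈ R.domain := fun n => hT2subR (v n).2
    have hRg := hRlim u huT huR g (T ⟨g, hgT⟩) hgR hgconv hTgconv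
    have hRh := hRlim v hvT hvR h (T ⟨h, hhT⟩) hhR hhconv hThconv
    have l1 : Tendsto
        (fun n => @inner 𝕜 H _ (T ⟨(u n : H), huT n⟩ : H) (T ⟨(v n : H), hvT n⟩ : H)) atTop
        (𝓝 (@inner 𝕜 H _ (T ⟨g, hgT⟩ : H) (T ⟨h, hhT⟩ : H))) := hTgconv.inner hThconv
    have l2 : Tendsto
        (fun n => @inner 𝕜 H _ (R ⟨(u n : H), huR n⟩ : H) (R ⟨(v n : H), hvR n⟩ : H)) atTop
        (𝓝 (@inner 𝕜 H _ (R ⟨g, hgR⟩ : H) (R ⟨h, hhR⟩ : H))) := hRg.inner hRh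
    have hfun : (fun n => @inner 𝕜 H _ (T ⟨(u n : H), huT n⟩ : H) (T ⟨(v n : H), hvT n⟩ : H))
        = fun n => @inner 𝕜 H _ (R ⟨(u n : H), huR n⟩ : H) (R ⟨(v n : H), hvR n⟩ : H) :=
      funext fun n => key _ _ (u n).2 (v n).2 (huT n) (hvT n) (huR n) (hvR n)
    rw [hfun] at l1
    exact tendsto_nhds_unique l1 l2
end
end

section
/- Let T be a densely defined positive symmetric operator, t(g,h) = ⟨Tg,h⟩ the associated form on D = dom T, and Q the canonical quotient map into H_t. Then D = D₊ (every g ∈ D satisfies |t(h,g)|² ≤ ‖h‖²‖Tg‖² for all h ∈ D), Q is closable, T = Q*Q, and T_F := Q*Q** is a positive self-adjoint extension of T. -/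
open Filter Topology RCLike
open scoped ComplexConjugate

noncomputable section
set_option linter.unusedSectionVars false

variable {𝕜 H K : Type*} [RCLike 𝕜] [NormedAddCommGroup H] [InnerProductSpace 𝕜 H]
  [NormedAddCommGroup K] [InnerProductSpace 𝕜 K] [CompleteSpace H] [CompleteSpace K]

section FriedrichsAux

local notation "⟪" x ", " y "⟫" => @inner 𝕜 _ _ x y

theorem pmap_congr {E F : Type*} [AddCommGroup E] [Module 𝕜 E] [AddCommGroup F] [Module 𝕜 F]
    (f : E →ₗ.[𝕜] F) {a b : f.domain} (h : (a : E) = b) : f a = f b := by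
  congr 1; exact Subtype.ext h

/-- The domain of the composition of two partial operators. -/
def pcompDomain (A : K →ₗ.[𝕜] H) (B : H →ₗ.[𝕜] K) : Submodule 𝕜 H where
  carrier := {x | ∃ hx : x ∈ B.domain, B ⟨x, hx⟩ ∈ A.domain}
  add_mem' := by
    rintro x y ⟨hx, hBx⟩ ⟨hy, hBy⟩
    refine ⟨B.domain.add_mem hx hy, ?_⟩
    have h : (⟨x + y, B.domain.add_mem hx hy⟩ : B.domain) = ⟨x, hx⟩ + ⟨y, hy⟩ := rfl
    rw [h, B.map_add]
    exact A.domain.add_mem hBx hBy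
  zero_mem' := ⟨B.domain.zero_mem, by
    have h : (⟨(0:H), B.domain.zero_mem⟩ : B.domain) = 0 := rfl
    rw [h, B.map_zero]; exact A.domain.zero_mem⟩
  smul_mem' := by
    rintro c x ⟨hx, hBx⟩
    refine ⟨B.domain.smul_mem c hx, ?_⟩
    have h : (⟨c • x, B.domain.smul_mem c hx⟩ : B.domain) = c • ⟨x, hx⟩ := rfl
    rw [h, B.map_smul]
    exact A.domain.smul_mem c hBx

/-- The composition of two partial operators. -/
def pcomp (A : K →ₗ.[𝕜] H) (B : H →ₗ.[𝕜] K) : H →ₗ.[𝕜] H where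
  domain := pcompDomain A B
  toFun :=
    { toFun := fun x => A ⟨B ⟨x.1, x.2.choose⟩, x.2.choose_spec⟩
      map_add' := by
        rintro ⟨x, hx⟩ ⟨y, hy⟩
        dsimp only
        rw [← A.map_add]
        apply pmap_congr
        show (B ⟨x + y, _⟩ : K) = (B ⟨x, _⟩ + B ⟨y, _⟩ : K)
        rw [← B.map_add]
        exact congr_arg _ (Subtype.ext rfl)
      map_smul' := by
        rintro c ⟨x, hx⟩
        dsimp only
        rw [RingHom.id_apply, ← A.map_smul]
        apply pmap_congr
        show (B ⟨_, _⟩ : K) = c • (B ⟨x, _⟩ : K)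
        rw [← B.map_smul]
        exact congr_arg _ (Subtype.ext rfl) }

theorem pcomp_apply {A : K →ₗ.[𝕜] H} {B : H →ₗ.[𝕜] K} {x : H}
    (hxC : x ∈ (pcomp A B).domain) (hx : x ∈ B.domain) (hBx : B ⟨x, hx⟩ ∈ A.domain) :
    pcomp A B ⟨x, hxC⟩ = A ⟨B ⟨x, hx⟩, hBx⟩ := rfl

theorem isPComp_pcomp (A : K →ₗ.[𝕜] H) (B : H →ₗ.[𝕜] K) : IsPComp A B (pcomp A B) :=
  ⟨fun _ => Iff.rfl, fun _ _ _ _ => rfl⟩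

theorem isClosable_of_graph_limit (Q : H →ₗ.[𝕜] K)
    (h : ∀ k : K, (0, k) ∈ closure (Q.graph : Set (H × K)) → k = 0) : Q.IsClosable := by
  refine ⟨Q.graph.topologicalClosure.toLinearPMap,
    (Submodule.toLinearPMap_graph_eq _ ?_).symm⟩
  rintro ⟨x, y⟩ hxy (rfl : x = 0)
  refine h y ?_
  rw [← Submodule.topologicalClosure_coe]
  exact hxy

theorem adjoint_closure_inner (Q : H →ₗ.[𝕜] K) (hQd : Dense (Q.domain : Set H))
    (hc : Q.IsClosable) (k : Q.adjoint.domain) (y : Q.closure.domain) :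
    ⟪Q.adjoint k, (y : H)⟫ = ⟪(k : K), Q.closure y⟫ := by
  have hg : ((y : H), Q.closure y) ∈ closure (Q.graph : Set (H × K)) := by
    rw [← Submodule.topologicalClosure_coe, hc.graph_closure_eq_closure_graph]
    exact Q.closure.mem_graph y
  obtain ⟨u, hu, hulim⟩ := mem_closure_iff_seq_limit.mp hg
  choose xn hxn1 hxn2 using fun n => Q.mem_graph_iff.mp (hu n)
  have h1 : Tendsto (fun n => ⟪Q.adjoint k, (u n).1⟫) atTop (𝓝 ⟪Q.adjoint k, (y : H)⟫) :=
    tendsto_const_nhds.inner ((continuous_fst.tendsto _).comp hulim)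
  have h2 : Tendsto (fun n => ⟪(k : K), (u n).2⟫) atTop (𝓝 ⟪(k : K), Q.closure y⟫) :=
    tendsto_const_nhds.inner ((continuous_snd.tendsto _).comp hulim)
  have heq : (fun n => ⟪Q.adjoint k, (u n).1⟫) = fun n => ⟪(k : K), (u n).2⟫ := by
    funext n
    rw [← hxn1, ← hxn2]
    exact LinearPMap.adjoint_isFormalAdjoint hQd k (xn n)
  rw [heq] at h1
  exact tendsto_nhds_unique h1 h2

theorem pcomp_surj (Q : H →ₗ.[𝕜] K) (hQd : Dense (Q.domain : Set H)) (hc : Q.IsClosable)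
    (h : H) : ∃ x : (pcomp Q.adjoint Q.closure).domain,
      (x : H) + pcomp Q.adjoint Q.closure x = h := by
  set S := Q.closure with hS
  have hSclosed : IsClosed (S.graph : Set (H × K)) := hc.closure_isClosed
  let e : WithLp 2 (H × K) ≃L[𝕜] H × K := WithLp.prodContinuousLinearEquiv 2 𝕜 H K
  let G : Submodule 𝕜 (WithLp 2 (H × K)) := S.graph.comap (e : WithLp 2 (H × K) →ₗ[𝕜] H × K)
  have hGmem : ∀ w : WithLp 2 (H × K), w ∈ G ↔ e w ∈ S.graph := fun w => Iff.rfl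
  have hGclosed : IsClosed (G : Set (WithLp 2 (H × K))) := by
    have h0 : (G : Set (WithLp 2 (H × K))) = e ⁻¹' (S.graph : Set (H × K)) := rfl
    rw [h0]
    exact hSclosed.preimage e.continuous
  haveI : CompleteSpace G := hGclosed.completeSpace_coe
  obtain ⟨y, hyG, z, hzG, hsum⟩ := G.exists_add_mem_mem_orthogonal (e.symm (h, 0))
  obtain ⟨x, hx⟩ := S.mem_graph_iff'.mp ((hGmem y).mp hyG)
  have hz : ∀ x' : Q.domain, ⟪(x' : H), (e z).1⟫ + ⟪Q x', (e z).2⟫ = 0 := by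
    intro x'
    have hw : e.symm ((x' : H), Q x') ∈ G := by
      rw [hGmem, e.apply_symm_apply]
      exact LinearPMap.le_graph_of_le Q.le_closure (Q.mem_graph x')
    have h1 := (Submodule.mem_orthogonal _ _).mp hzG _ hw
    rw [WithLp.prod_inner_apply] at h1
    exact h1
  have hyz : (h, (0:K)) = e y + e z := by
    have h1 := congrArg e hsum
    rwa [e.apply_symm_apply, map_add] at h1
  have hcomp1 : h = (x : H) + (e z).1 := by
    have := congrArg Prod.fst hyz
    rwa [← hx] at this
  have hcomp2 : (0 : K) = S x + (e z).2 := by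
    have := congrArg Prod.snd hyz
    rwa [← hx] at this
  have key : ∀ x' : Q.domain, ⟪-(e z).1, (x' : H)⟫ = ⟪(e z).2, Q x'⟫ := by
    intro x'
    have h0 := hz x'
    have h1 : ⟪Q x', (e z).2⟫ = -⟪(x' : H), (e z).1⟫ := eq_neg_of_add_eq_zero_right h0
    calc ⟪-(e z).1, (x' : H)⟫ = -⟪(e z).1, (x' : H)⟫ := inner_neg_left _ _
      _ = -(starRingEnd 𝕜) ⟪(x' : H), (e z).1⟫ := by rw [inner_conj_symm]
      _ = (starRingEnd 𝕜) (-⟪(x' : H), (e z).1⟫) := (map_neg _ _).symm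
      _ = (starRingEnd 𝕜) ⟪Q x', (e z).2⟫ := by rw [h1]
      _ = ⟪(e z).2, Q x'⟫ := inner_conj_symm _ _
  have hmem : (e z).2 ∈ Q.adjoint.domain :=
    LinearPMap.mem_adjoint_domain_of_exists _ ⟨-(e z).1, key⟩
  have hval : Q.adjoint ⟨(e z).2, hmem⟩ = -(e z).1 :=
    LinearPMap.adjoint_apply_eq hQd _ key
  have hSx : S x = -(e z).2 := by
    rw [eq_neg_iff_add_eq_zero]
    exact hcomp2.symm
  have hSxmem : S x ∈ Q.adjoint.domain := hSx ▸ neg_mem hmem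
  have hQSx : Q.adjoint ⟨S x, hSxmem⟩ = (e z).1 := by
    have h0 : (⟨S x, hSxmem⟩ : Q.adjoint.domain) = -⟨(e z).2, hmem⟩ := Subtype.ext (by
      simp [hSx])
    rw [h0, LinearPMap.map_neg, hval, neg_neg]
  refine ⟨⟨(x : H), ⟨x.2, hSxmem⟩⟩, ?_⟩
  have hv : pcomp Q.adjoint S ⟨(x : H), ⟨x.2, hSxmem⟩⟩ = Q.adjoint ⟨S x, hSxmem⟩ :=
    pcomp_apply ⟨x.2, hSxmem⟩ x.2 hSxmem
  rw [hv, hQSx]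
  exact hcomp1.symm

theorem pcomp_symm_inner (Q : H →ₗ.[𝕜] K) (hQd : Dense (Q.domain : Set H))
    (hc : Q.IsClosable) (x y : (pcomp Q.adjoint Q.closure).domain) :
    ⟪pcomp Q.adjoint Q.closure x, (y : H)⟫ = ⟪(x : H), pcomp Q.adjoint Q.closure y⟫ := by
  obtain ⟨hx, hSx⟩ := x.2
  obtain ⟨hy, hSy⟩ := y.2
  have hvx : pcomp Q.adjoint Q.closure x = Q.adjoint ⟨Q.closure ⟨(x : H), hx⟩, hSx⟩ :=
    pcomp_apply x.2 hx hSx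
  have hvy : pcomp Q.adjoint Q.closure y = Q.adjoint ⟨Q.closure ⟨(y : H), hy⟩, hSy⟩ :=
    pcomp_apply y.2 hy hSy
  rw [hvx, hvy]
  calc ⟪Q.adjoint ⟨Q.closure ⟨(x : H), hx⟩, hSx⟩, (y : H)⟫
      = ⟪(Q.closure ⟨(x : H), hx⟩ : K), Q.closure ⟨(y : H), hy⟩⟫ :=
        adjoint_closure_inner Q hQd hc _ ⟨(y : H), hy⟩
    _ = (starRingEnd 𝕜) ⟪(Q.closure ⟨(y : H), hy⟩ : K), Q.closure ⟨(x : H), hx⟩⟫ :=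
        (inner_conj_symm _ _).symm
    _ = (starRingEnd 𝕜) ⟪Q.adjoint ⟨Q.closure ⟨(y : H), hy⟩, hSy⟩, (x : H)⟫ := by
        rw [adjoint_closure_inner Q hQd hc ⟨Q.closure ⟨(y : H), hy⟩, hSy⟩ ⟨(x : H), hx⟩]
    _ = ⟪(x : H), Q.adjoint ⟨Q.closure ⟨(y : H), hy⟩, hSy⟩⟫ := inner_conj_symm _ _

theorem pcomp_isPositive (Q : H →ₗ.[𝕜] K) (hQd : Dense (Q.domain : Set H))
    (hc : Q.IsClosable) : IsPositivePMap (pcomp Q.adjoint Q.closure) := by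
  intro x
  obtain ⟨hx, hSx⟩ := x.2
  have hvx : pcomp Q.adjoint Q.closure x = Q.adjoint ⟨Q.closure ⟨(x : H), hx⟩, hSx⟩ :=
    pcomp_apply x.2 hx hSx
  have h1 : ⟪(x : H), pcomp Q.adjoint Q.closure x⟫
      = ⟪(Q.closure ⟨(x : H), hx⟩ : K), Q.closure ⟨(x : H), hx⟩⟫ := by
    rw [← inner_conj_symm, hvx,
      adjoint_closure_inner Q hQd hc ⟨Q.closure ⟨(x : H), hx⟩, hSx⟩ ⟨(x : H), hx⟩,
      inner_conj_symm]
  rw [h1]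
  exact inner_self_nonneg

theorem pcomp_isSelfAdjoint (Q : H →ₗ.[𝕜] K) (hQd : Dense (Q.domain : Set H))
    (hc : Q.IsClosable) (hd : Dense ((pcomp Q.adjoint Q.closure).domain : Set H)) :
    IsSelfAdjoint (pcomp Q.adjoint Q.closure) := by
  set TF := pcomp Q.adjoint Q.closure with hTF
  have hsymmTF : TF.IsFormalAdjoint TF := fun x y => pcomp_symm_inner Q hQd hc x y
  have h1 : TF ≤ TF.adjoint := LinearPMap.IsFormalAdjoint.le_adjoint hd hsymmTF
  rw [LinearPMap.isSelfAdjoint_def]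
  have key : ∀ u : TF.adjoint.domain, ∃ w : TF.domain,
      (w : H) = (u : H) ∧ TF w = TF.adjoint u := by
    intro u
    obtain ⟨w, hw⟩ := pcomp_surj Q hQd hc ((u : H) + TF.adjoint u)
    have horth : ∀ x : TF.domain, ⟪(u : H) - (w : H), (x : H) + TF x⟫ = 0 := by
      intro x
      have hu' : ⟪(u : H), TF x⟫ = ⟪TF.adjoint u, (x : H)⟫ :=
        (LinearPMap.adjoint_isFormalAdjoint hd u x).symm
      have hw' : ⟪(w : H), TF x⟫ = ⟪TF w, (x : H)⟫ := (pcomp_symm_inner Q hQd hc w x).symm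
      calc ⟪(u : H) - (w : H), (x : H) + TF x⟫
          = ⟪(u : H), (x : H)⟫ + ⟪(u : H), TF x⟫ - (⟪(w : H), (x : H)⟫ + ⟪(w : H), TF x⟫) := by
            rw [inner_sub_left, inner_add_right, inner_add_right]
        _ = ⟪(u : H) + TF.adjoint u, (x : H)⟫ - ⟪(w : H) + TF w, (x : H)⟫ := by
            rw [hu', hw', inner_add_left, inner_add_left]
        _ = 0 := by rw [hw, sub_self]
    have hzero : (u : H) - (w : H) = 0 := by
      have hall : ∀ v : H, ⟪(u : H) - (w : H), v⟫ = 0 := by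
        intro v
        obtain ⟨xv, hxv⟩ := pcomp_surj Q hQd hc v
        rw [← hxv]
        exact horth xv
      exact inner_self_eq_zero.mp (hall _)
    have hwu : (w : H) = (u : H) := by rw [← sub_eq_zero]; rw [sub_eq_zero] at hzero ⊢; exact hzero.symm
    refine ⟨w, hwu, ?_⟩
    have hw2 := hw
    rw [hwu] at hw2
    exact add_left_cancel hw2
  have h2 : TF.adjoint ≤ TF := by
    refine ⟨fun a ha => ?_, fun u x hux => ?_⟩
    · obtain ⟨w, hw1, _⟩ := key ⟨a, ha⟩
      rw [show a = ((w : H)) from hw1.symm]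
      exact w.2
    · obtain ⟨w, hw1, hw2⟩ := key u
      rw [← hw2]
      exact pmap_congr TF (hw1.trans hux)
  exact le_antisymm h2 h1

end FriedrichsAux

/-- For a densely defined positive symmetric operator `T` with associated form
`t(g,h) = ⟪T g, h⟫` and canonical quotient map `Q` into `H_t`: `D = D₊`, `Q` is closable,
`T = Q*Q`, and `T_F := Q*Q**` is a positive self-adjoint extension of `T`. -/
theorem friedrichs_construction (T : H →ₗ.[𝕜] H) (hdense : Dense (T.domain : Set H))
    (hsymm : ∀ x y : T.domain, @inner 𝕜 H _ (T x) (y : H) = @inner 𝕜 H _ (x : H) (T y))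
    (hpos : IsPositivePMap T)
    (Q : H →ₗ.[𝕜] K) (hQdom : ∀ x : H, x ∈ Q.domain ↔ x ∈ T.domain)
    (hQt : ∀ (x y : H) (hxQ : x ∈ Q.domain) (hyQ : y ∈ Q.domain) (hxT : x ∈ T.domain),
      @inner 𝕜 K _ (Q ⟨x, hxQ⟩) (Q ⟨y, hyQ⟩) = @inner 𝕜 H _ (T ⟨x, hxT⟩) y)
    (hran : Dense (Set.range fun x : Q.domain => Q x)) :
    (∀ (g : H) (hg : g ∈ T.domain), ∃ C : ℝ, 0 ≤ C ∧
      ∀ h : T.domain, ‖@inner 𝕜 H _ (T ⟨g, hg⟩) (h : H)‖ ^ 2 ≤ C * ‖(h : H)‖ ^ 2) ∧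
    Q.IsClosable ∧ IsPComp Q.adjoint Q T ∧
    ∃ TF : H →ₗ.[𝕜] H, IsPComp Q.adjoint Q.closure TF ∧ IsSelfAdjoint TF ∧
      IsPositivePMap TF ∧ T ≤ TF := by
  have hQdense : Dense (Q.domain : Set H) := by
    have hset : (Q.domain : Set H) = (T.domain : Set H) := Set.ext fun x => hQdom x
    rw [hset]; exact hdense
  -- membership of `Q g` in the adjoint domain, for `g ∈ dom T`
  have hQmem : ∀ (g : H) (hg : g ∈ T.domain),
      Q ⟨g, (hQdom g).mpr hg⟩ ∈ Q.adjoint.domain := by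
    intro g hg
    refine LinearPMap.mem_adjoint_domain_of_exists _ ⟨T ⟨g, hg⟩, fun x' => ?_⟩
    exact (hQt g x' ((hQdom g).mpr hg) x'.2 hg).symm
  have hQval : ∀ (g : H) (hg : g ∈ T.domain),
      Q.adjoint ⟨Q ⟨g, (hQdom g).mpr hg⟩, hQmem g hg⟩ = T ⟨g, hg⟩ := by
    intro g hg
    exact LinearPMap.adjoint_apply_eq hQdense _ fun x' =>
      (hQt g x' ((hQdom g).mpr hg) x'.2 hg).symm
  -- closability
  have hclosable : Q.IsClosable := by
    apply isClosable_of_graph_limit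
    intro k hk
    obtain ⟨u, hu, hulim⟩ := mem_closure_iff_seq_limit.mp hk
    choose xn hxn1 hxn2 using fun n => Q.mem_graph_iff.mp (hu n)
    have hip : ∀ h' : Q.domain, @inner 𝕜 K _ k (Q h') = 0 := by
      intro h'
      have hTmem : (h' : H) ∈ T.domain := (hQdom h').mp h'.2
      have hkey : (fun n => @inner 𝕜 K _ ((u n).2) (Q h'))
          = fun n => @inner 𝕜 H _ ((u n).1) (T ⟨(h' : H), hTmem⟩) := by
        funext n
        rw [← hxn1, ← hxn2]
        calc @inner 𝕜 K _ (Q (xn n)) (Q h')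
            = @inner 𝕜 H _ (T ⟨(xn n : H), (hQdom _).mp (xn n).2⟩) (h' : H) :=
              hQt _ _ (xn n).2 h'.2 _
          _ = @inner 𝕜 H _ ((xn n : H)) (T ⟨(h' : H), hTmem⟩) :=
              hsymm ⟨(xn n : H), (hQdom _).mp (xn n).2⟩ ⟨(h' : H), hTmem⟩
      have h1 : Tendsto (fun n => @inner 𝕜 K _ ((u n).2) (Q h')) atTop
          (𝓝 (@inner 𝕜 K _ k (Q h'))) :=
        (((continuous_snd.tendsto _).comp hulim).inner tendsto_const_nhds)
      have h2 : Tendsto (fun n => @inner 𝕜 H _ ((u n).1) (T ⟨(h' : H), hTmem⟩)) atTop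
          (𝓝 (@inner 𝕜 H _ (0 : H) (T ⟨(h' : H), hTmem⟩))) :=
        (((continuous_fst.tendsto _).comp hulim).inner tendsto_const_nhds)
      rw [hkey] at h1
      have := tendsto_nhds_unique h1 h2
      rwa [inner_zero_left] at this
    have hC : IsClosed {y : K | @inner 𝕜 K _ k y = 0} :=
      isClosed_eq (continuous_const.inner continuous_id) continuous_const
    have hsubC : Set.range (fun x : Q.domain => Q x) ⊆ {y : K | @inner 𝕜 K _ k y = 0} := by
      rintro _ ⟨h', rfl⟩
      exact hip h'
    have hallzero : ∀ y : K, @inner 𝕜 K _ k y = 0 := by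
      intro y
      have h3 := closure_minimal hsubC hC
      rw [hran.closure_eq] at h3
      exact h3 (Set.mem_univ y)
    exact inner_self_eq_zero.mp (hallzero k)
  refine ⟨?_, hclosable, ?_, ?_⟩
  · -- D = D₊
    intro g hg
    refine ⟨‖T ⟨g, hg⟩‖ ^ 2, sq_nonneg _, fun h => ?_⟩
    calc ‖@inner 𝕜 H _ (T ⟨g, hg⟩) (h : H)‖ ^ 2
        ≤ (‖T ⟨g, hg⟩‖ * ‖(h : H)‖) ^ 2 :=
          pow_le_pow_left₀ (norm_nonneg _) (norm_inner_le_norm _ _) 2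
      _ = ‖T ⟨g, hg⟩‖ ^ 2 * ‖(h : H)‖ ^ 2 := mul_pow _ _ 2
  · -- T = Q* Q
    constructor
    · intro x
      constructor
      · intro hxT
        exact ⟨(hQdom x).mpr hxT, hQmem x hxT⟩
      · rintro ⟨hxQ, -⟩
        exact (hQdom x).mp hxQ
    · intro x hxC hx hBx
      exact (hQval x hxC).symm
  · -- T_F
    set TF := pcomp Q.adjoint Q.closure with hTFdef
    have hsub : ∀ (g : H), g ∈ T.domain → g ∈ TF.domain := by
      intro g hg
      have hgQ : g ∈ Q.domain := (hQdom g).mpr hg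
      have hgS : g ∈ Q.closure.domain := Q.le_closure.1 hgQ
      have heq : Q ⟨g, hgQ⟩ = Q.closure ⟨g, hgS⟩ := Q.le_closure.2 rfl
      refine ⟨hgS, ?_⟩
      rw [← heq]
      exact hQmem g hg
    have hTFdense : Dense (TF.domain : Set H) :=
      hdense.mono fun x hx => hsub x hx
    refine ⟨TF, isPComp_pcomp _ _, pcomp_isSelfAdjoint Q hQdense hclosable hTFdense,
      pcomp_isPositive Q hQdense hclosable, ?_⟩
    refine ⟨fun a ha => hsub a ha, ?_⟩
    intro x y hxy
    have hgQ : (y : H) ∈ Q.domain := (hQdom _).mpr (hxy ▸ x.2)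
    have hgT : (y : H) ∈ T.domain := (hQdom _).mp hgQ
    have hgS : (y : H) ∈ Q.closure.domain := Q.le_closure.1 hgQ
    have heq : Q ⟨(y : H), hgQ⟩ = Q.closure ⟨(y : H), hgS⟩ := Q.le_closure.2 rfl
    have hmem2 : Q.closure ⟨(y : H), hgS⟩ ∈ Q.adjoint.domain := by
      rw [← heq]; exact hQmem _ hgT
    have hvy : TF y = Q.adjoint ⟨Q.closure ⟨(y : H), hgS⟩, hmem2⟩ :=
      pcomp_apply y.2 hgS hmem2
    rw [hvy]
    have h5 : Q.adjoint ⟨Q.closure ⟨(y : H), hgS⟩, hmem2⟩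
        = Q.adjoint ⟨Q ⟨(y : H), hgQ⟩, hQmem _ hgT⟩ := pmap_congr _ heq.symm
    rw [h5, hQval _ hgT]
    exact pmap_congr T hxy
end
end

section
/- If t is a nonnegative symmetric form with dense domain D satisfying D₊ = D, then t is closable, and the Friedrichs extension of the positive symmetric operator Q*Q equals Q*Q**, i.e., (Q*Q)_F = Q*Q**. -/
open Filter Topology RCLike
open scoped ComplexConjugate

noncomputable section

variable {𝕜 H K : Type*} [RCLike 𝕜] [NormedAddCommGroup H] [InnerProductSpace 𝕜 H]
  [NormedAddCommGroup K] [InnerProductSpace 𝕜 K] [CompleteSpace H] [CompleteSpace K]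

open LinearPMap

local notation "⟪" x ", " y "⟫" => inner (𝕜 := 𝕜) x y

set_option linter.unusedSectionVars false
set_option maxHeartbeats 1000000


theorem my_apply_eq_of_eq {f g : H →ₗ.[𝕜] K} (h : f = g) {x : H} (hf : x ∈ f.domain)
    (hg : x ∈ g.domain) : f ⟨x, hf⟩ = g ⟨x, hg⟩ := by subst h; rfl

theorem my_adjoint_graph_eq (T : H →ₗ.[𝕜] K) (hT : Dense (T.domain : Set H)) :
    ((T†).graph : Set (K × H)) = {p | ∀ x : T.domain, ⟪p.2, (x : H)⟫ = ⟪p.1, T x⟫} := by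
  ext ⟨y, z⟩
  constructor
  · intro hm x
    rcases (T†).mem_graph_iff.mp hm with ⟨y', hy1, hy2⟩
    simp only [Set.mem_setOf_eq]
    have := (adjoint_isFormalAdjoint hT) y' x
    rw [hy2, hy1] at this
    exact this
  · intro h
    have hmem : y ∈ (T†).domain := mem_adjoint_domain_of_exists y ⟨z, fun x => h x⟩
    have happ : T† ⟨y, hmem⟩ = z := adjoint_apply_eq hT ⟨y, hmem⟩ (fun x => h x)
    exact (T†).mem_graph_iff.mpr ⟨⟨y, hmem⟩, rfl, happ⟩

theorem my_adjoint_graph_isClosed (T : H →ₗ.[𝕜] K) (hT : Dense (T.domain : Set H)) :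
    IsClosed ((T†).graph : Set (K × H)) := by
  rw [my_adjoint_graph_eq T hT]
  have : {p : K × H | ∀ x : T.domain, ⟪p.2, (x : H)⟫ = ⟪p.1, T x⟫} =
      ⋂ x : T.domain, {p : K × H | ⟪p.2, (x : H)⟫ = ⟪p.1, T x⟫} := by
    ext p; simp [Set.mem_iInter]
  rw [this]
  refine isClosed_iInter fun x => isClosed_eq ?_ ?_
  · exact (continuous_snd.inner continuous_const)
  · exact (continuous_fst.inner continuous_const)

theorem my_selfAdjoint_graph_isClosed {A : H →ₗ.[𝕜] H} (hA : IsSelfAdjoint A) :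
    IsClosed (A.graph : Set (H × H)) := by
  have hd := hA.dense_domain
  have h := isSelfAdjoint_def.mp hA
  rw [← h]
  exact my_adjoint_graph_isClosed A hd

theorem my_closure_approx (Q : H →ₗ.[𝕜] K) (hc : Q.IsClosable) (x : Q.closure.domain) :
    ∃ u : ℕ → Q.domain, Tendsto (fun n => ((u n : H))) atTop (𝓝 (x : H)) ∧
      Tendsto (fun n => Q (u n)) atTop (𝓝 (Q.closure x)) := by
  have hg : ((x : H), Q.closure x) ∈ closure (Q.graph : Set (H × K)) := by
    have h1 := Q.closure.mem_graph x
    rw [← hc.graph_closure_eq_closure_graph] at h1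
    exact h1
  obtain ⟨p, hp, hplim⟩ := mem_closure_iff_seq_limit.mp hg
  have h1 : ∀ n, ∃ y : Q.domain, (y : H) = (p n).1 ∧ Q y = (p n).2 := fun n =>
    Q.mem_graph_iff.mp (hp n)
  choose u hu1 hu2 using h1
  refine ⟨u, ?_, ?_⟩
  · have := (continuous_fst.tendsto ((x : H), Q.closure x)).comp hplim
    simpa only [Function.comp_def, hu1] using this
  · have := (continuous_snd.tendsto ((x : H), Q.closure x)).comp hplim
    simpa only [Function.comp_def, hu2] using this

set_option linter.unusedSectionVars false

theorem my_isClosable (Q : H →ₗ.[𝕜] K) (hT : Dense (Q.domain : Set H))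
    (hT' : Dense (((Q†)).domain : Set K)) : Q.IsClosable := by
  have h1 : Q ≤ (Q†)† := (adjoint_isFormalAdjoint hT).le_adjoint hT'
  have h2 : ((Q†)†).IsClosed := my_adjoint_graph_isClosed (Q†) hT'
  exact h2.isClosable.leIsClosable h1

theorem my_closure_formal (Q : H →ₗ.[𝕜] K) (hT : Dense (Q.domain : Set H)) (hc : Q.IsClosable)
    (y : (Q†).domain) (x : Q.closure.domain) :
    ⟪Q† y, (x : H)⟫ = ⟪(y : K), Q.closure x⟫ := by
  obtain ⟨u, hu1, hu2⟩ := my_closure_approx Q hc x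
  have h1 : ∀ n, ⟪Q† y, ((u n : H))⟫ = ⟪(y : K), Q (u n)⟫ := fun n =>
    adjoint_isFormalAdjoint hT y (u n)
  have l1 : Tendsto (fun n => ⟪Q† y, ((u n : H))⟫) atTop (𝓝 ⟪Q† y, (x : H)⟫) :=
    tendsto_const_nhds.inner hu1
  have l2 : Tendsto (fun n => ⟪(y : K), Q (u n)⟫) atTop (𝓝 ⟪(y : K), Q.closure x⟫) :=
    tendsto_const_nhds.inner hu2
  rw [funext h1] at l1
  exact tendsto_nhds_unique l1 l2

theorem my_vonNeumann (Q : H →ₗ.[𝕜] K) (hT : Dense (Q.domain : Set H)) (hc : Q.IsClosable)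
    (h : H) :
    ∃ (x : H) (hx : x ∈ Q.closure.domain) (hQx : Q.closure ⟨x, hx⟩ ∈ (Q†).domain),
      x + Q† ⟨Q.closure ⟨x, hx⟩, hQx⟩ = h := by
  classical
  set e := WithLp.prodContinuousLinearEquiv 2 𝕜 H K with he
  set G : Submodule 𝕜 (WithLp 2 (H × K)) :=
    Q.closure.graph.comap (e.toLinearEquiv : WithLp 2 (H × K) →ₗ[𝕜] H × K) with hG
  have hGmem : ∀ w : WithLp 2 (H × K), w ∈ G ↔ e w ∈ Q.closure.graph := fun w => Iff.rfl
  have hGclosed : IsClosed (G : Set (WithLp 2 (H × K))) := by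
    have h1 : (G : Set _) = e ⁻¹' (Q.closure.graph : Set (H × K)) := rfl
    rw [h1]
    exact (hc.closure_isClosed).preimage e.continuous
  haveI : CompleteSpace G := hGclosed.completeSpace_coe
  obtain ⟨g, hg, w, hw, hv⟩ := G.exists_add_mem_mem_orthogonal (e.symm (h, 0))
  rcases Q.closure.mem_graph_iff.mp ((hGmem g).mp hg) with ⟨x, hx1, hx2⟩
  have hinner : ∀ (p : H × K) (z : WithLp 2 (H × K)),
      ⟪(e.symm p : WithLp 2 (H × K)), z⟫ = ⟪p.1, (e z).1⟫ + ⟪p.2, (e z).2⟫ := fun p z => rfl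
  have hew : e w = (h, 0) - e g := by
    have h1 : w = e.symm (h, 0) - g := by
      rw [hv]; abel
    have h2 : e (e.symm (h, 0) - g) = e (e.symm (h, 0)) - e g := map_sub e.toLinearEquiv _ _
    rw [h1, h2, e.apply_symm_apply]
  have claim : ∀ u : Q.closure.domain, ⟪Q.closure u, Q.closure x⟫ = ⟪(u : H), h - (x : H)⟫ := by
    intro u
    have hgu : (e.symm ((u : H), Q.closure u) : WithLp 2 (H × K)) ∈ G := by
      rw [hGmem, e.apply_symm_apply]
      exact Q.closure.mem_graph u
    have h0 := (Submodule.mem_orthogonal G w).mp hw _ hgu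
    rw [hinner] at h0
    rw [hew] at h0
    simp only [Prod.fst_sub, Prod.snd_sub, ← hx1, ← hx2] at h0
    simp only [inner_sub_right, inner_zero_right] at h0
    rw [inner_sub_right]
    linear_combination -h0
  have claim2 : ∀ u0 : Q.domain, ⟪Q.closure x, Q u0⟫ = ⟪h - (x : H), (u0 : H)⟫ := by
    intro u0
    have hm : (u0 : H) ∈ Q.closure.domain := Q.le_closure.1 u0.2
    have hval : Q.closure ⟨(u0 : H), hm⟩ = Q u0 := (Q.le_closure.2 (by rfl)).symm
    have hcl := claim ⟨(u0 : H), hm⟩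
    rw [hval] at hcl
    calc ⟪Q.closure x, Q u0⟫ = starRingEnd 𝕜 ⟪Q u0, Q.closure x⟫ := (inner_conj_symm _ _).symm
      _ = starRingEnd 𝕜 ⟪(u0 : H), h - (x : H)⟫ := by rw [hcl]
      _ = ⟪h - (x : H), (u0 : H)⟫ := inner_conj_symm _ _
  have hQx : Q.closure x ∈ (Q†).domain :=
    mem_adjoint_domain_of_exists _ ⟨h - (x : H), fun u0 => (claim2 u0).symm⟩
  have happ : Q† ⟨Q.closure x, hQx⟩ = h - (x : H) :=
    adjoint_apply_eq hT _ (fun u0 => (claim2 u0).symm)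
  refine ⟨(x : H), x.2, hQx, ?_⟩
  show (x : H) + Q† ⟨Q.closure x, hQx⟩ = h
  rw [happ]; abel

theorem my_closed_closure_eq {f : H →ₗ.[𝕜] K} (hf : f.IsClosed) : f.closure = f := by
  have hc : f.IsClosable := hf.isClosable
  apply eq_of_eq_graph
  rw [← hc.graph_closure_eq_closure_graph, IsClosed.submodule_topologicalClosure_eq hf]

theorem my_symm {A : H →ₗ.[𝕜] H} (hA : IsSelfAdjoint A) (x y : A.domain) :
    ⟪A x, (y : H)⟫ = ⟪(x : H), A y⟫ := by
  have hd := hA.dense_domain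
  have heq := isSelfAdjoint_def.mp hA
  have hx : (x : H) ∈ (A†).domain := by rw [heq]; exact x.2
  have h1 := adjoint_isFormalAdjoint hd ⟨(x : H), hx⟩ y
  rwa [my_apply_eq_of_eq heq hx x.2] at h1

theorem my_selfadjoint_of_symm_surj (T : H →ₗ.[𝕜] H) (hT : Dense (T.domain : Set H))
    (hsym : ∀ x y : T.domain, ⟪T x, (y : H)⟫ = ⟪(x : H), T y⟫)
    (hsurj : ∀ v : H, ∃ x : T.domain, (x : H) + T x = v) : IsSelfAdjoint T := by
  have hformal : T.IsFormalAdjoint T := fun x y => hsym x y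
  have hle : T ≤ T† := hformal.le_adjoint hT
  have hTT : (T†).IsFormalAdjoint T := adjoint_isFormalAdjoint hT
  have key : ∀ (y : H) (hy : y ∈ (T†).domain), ∃ hx : y ∈ T.domain,
      T ⟨y, hx⟩ = T† ⟨y, hy⟩ := by
    intro y hy
    obtain ⟨x, hxeq⟩ := hsurj (y + T† ⟨y, hy⟩)
    have hxd : (x : H) ∈ (T†).domain := hle.1 x.2
    have hTx : T† ⟨(x : H), hxd⟩ = T x := (hle.2 (x := x) (y := ⟨(x : H), hxd⟩) rfl).symm
    set z := y - (x : H) with hzdef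
    have hzmem : z ∈ (T†).domain := sub_mem hy hxd
    have hzsub : (⟨z, hzmem⟩ : ((T†).domain)) = ⟨y, hy⟩ - ⟨(x : H), hxd⟩ := rfl
    have hz0 : z + T† ⟨z, hzmem⟩ = 0 := by
      have h2 : T† ⟨z, hzmem⟩ = T† ⟨y, hy⟩ - T† ⟨(x : H), hxd⟩ := by
        rw [hzsub]; exact (T†).map_sub _ _
      rw [h2, hTx, hzdef, sub_add_sub_comm, sub_eq_zero]
      exact hxeq.symm
    have hzero : ∀ v : H, ⟪z, v⟫ = 0 := by
      intro v
      obtain ⟨u, hu⟩ := hsurj v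
      rw [← hu, inner_add_right, ← hTT ⟨z, hzmem⟩ u, ← inner_add_left, hz0, inner_zero_left]
    have hz : z = 0 := inner_self_eq_zero.mp (hzero z)
    have hyx : y = (x : H) := by rwa [hzdef, sub_eq_zero] at hz
    have hx : y ∈ T.domain := hyx ▸ x.2
    refine ⟨hx, ?_⟩
    have h3 : T ⟨y, hx⟩ = T x := by congr 1; exact Subtype.ext hyx
    have h4 : (x : H) + T x = y + T† ⟨y, hy⟩ := hxeq
    rw [← hyx] at h4
    rw [h3, add_left_cancel h4]
  have hge : T† ≤ T := by
    refine ⟨fun y hy => (key y hy).1, ?_⟩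
    intro a b hab
    rcases key (a : H) a.2 with ⟨hx, hval⟩
    have hb : b = ⟨(a : H), hx⟩ := Subtype.ext hab.symm
    rw [hb]
    exact hval.symm
  exact isSelfAdjoint_def.mpr (le_antisymm hge hle)

theorem my_core_approx (R : H →ₗ.[𝕜] H) (hR : IsSelfAdjoint R)
    (hsurj : ∀ v : H, ∃ (x : H) (hx : x ∈ R.domain) (hRx : R ⟨x, hx⟩ ∈ R.domain),
      x + R ⟨R ⟨x, hx⟩, hRx⟩ = v)
    (h : R.domain) :
    ∃ u : ℕ → R.domain, (∀ n, R (u n) ∈ R.domain) ∧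
      Tendsto (fun n => ((u n : H))) atTop (𝓝 (h : H)) ∧
      Tendsto (fun n => R (u n)) atTop (𝓝 (R h)) := by
  classical
  have hclosed : IsClosed (R.graph : Set (H × H)) := my_selfAdjoint_graph_isClosed hR
  set e := WithLp.prodContinuousLinearEquiv 2 𝕜 H H with he
  set P : Submodule 𝕜 (H × H) := R.graph ⊓ Submodule.prod ⊤ R.domain with hP
  set W : Submodule 𝕜 (WithLp 2 (H × H)) :=
    P.comap (e.toLinearEquiv : WithLp 2 (H × H) →ₗ[𝕜] H × H) with hW
  set G : Submodule 𝕜 (WithLp 2 (H × H)) :=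
    R.graph.comap (e.toLinearEquiv : WithLp 2 (H × H) →ₗ[𝕜] H × H) with hG
  have hWmem : ∀ z : WithLp 2 (H × H), z ∈ W ↔ e z ∈ P := fun z => Iff.rfl
  have hGmem : ∀ z : WithLp 2 (H × H), z ∈ G ↔ e z ∈ R.graph := fun z => Iff.rfl
  have hGclosed : IsClosed (G : Set (WithLp 2 (H × H))) := by
    have h1 : (G : Set _) = e ⁻¹' (R.graph : Set (H × H)) := rfl
    rw [h1]; exact hclosed.preimage e.continuous
  set W' := W.topologicalClosure with hW'
  have hW'closed : IsClosed (W' : Set (WithLp 2 (H × H))) := W.isClosed_topologicalClosure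
  haveI : CompleteSpace W' := hW'closed.completeSpace_coe
  have hWG : W' ≤ G := by
    apply Submodule.topologicalClosure_minimal
    · intro z hz
      rw [hGmem]
      exact ((hWmem z).mp hz).1
    · exact hGclosed
  have hinner : ∀ (p : H × H) (z : WithLp 2 (H × H)),
      ⟪(e.symm p : WithLp 2 (H × H)), z⟫ = ⟪p.1, (e z).1⟫ + ⟪p.2, (e z).2⟫ := fun p z => rfl
  set v : WithLp 2 (H × H) := e.symm ((h : H), R h) with hv
  have hvG : v ∈ G := by
    rw [hGmem, hv, e.apply_symm_apply]
    exact R.mem_graph h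
  obtain ⟨g, hg, w, hw, hdecomp⟩ := W'.exists_add_mem_mem_orthogonal v
  have hwG : w ∈ G := by
    have : w = v - g := by rw [hdecomp]; abel
    exact this ▸ sub_mem hvG (hWG hg)
  rcases R.mem_graph_iff.mp ((hGmem w).mp hwG) with ⟨c, hc1, hc2⟩
  have claim : ∀ (x : H) (hx : x ∈ R.domain) (hRx : R ⟨x, hx⟩ ∈ R.domain),
      ⟪x + R ⟨R ⟨x, hx⟩, hRx⟩, (c : H)⟫ = 0 := by
    intro x hx hRx
    have hu : (e.symm (x, R ⟨x, hx⟩) : WithLp 2 (H × H)) ∈ W := by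
      rw [hWmem, e.apply_symm_apply, hP]
      refine Submodule.mem_inf.mpr ⟨R.mem_graph ⟨x, hx⟩, ?_⟩
      exact Submodule.mem_prod.mpr ⟨trivial, hRx⟩
    have h0 := (Submodule.mem_orthogonal W' w).mp hw _ (W.le_topologicalClosure hu)
    rw [hinner] at h0
    simp only [← hc1, ← hc2] at h0
    have hsymm : ⟪R ⟨x, hx⟩, R c⟫ = ⟪R ⟨R ⟨x, hx⟩, hRx⟩, (c : H)⟫ := (my_symm hR ⟨R ⟨x, hx⟩, hRx⟩ c).symm
    rw [hsymm] at h0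
    rw [inner_add_left]
    exact h0
  have hc0 : (c : H) = 0 := by
    apply @inner_self_eq_zero 𝕜 _ _ _ _ |>.mp
    obtain ⟨x0, hx0, hR0, heq⟩ := hsurj (c : H)
    nth_rewrite 1 [← heq]
    exact claim x0 hx0 hR0
  have hw0 : w = 0 := by
    have h1 : e w = 0 := by
      have h2 : e w = ((e w).1, (e w).2) := rfl
      have h3 : (e w).1 = 0 := by rw [← hc1]; exact hc0
      have h4 : (e w).2 = 0 := by
        rw [← hc2]
        have : c = (0 : R.domain) := Subtype.ext hc0
        rw [this, LinearPMap.map_zero R]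
      rw [h2, h3, h4]; rfl
    have := congrArg e.symm h1
    rwa [e.symm_apply_apply, show e.symm (0 : H × H) = 0 from _root_.map_zero e.symm] at this
  have hvW' : v ∈ W' := by rw [hdecomp, hw0, add_zero]; exact hg
  have hvcl : v ∈ closure (W : Set (WithLp 2 (H × H))) := by
    rw [← Submodule.topologicalClosure_coe]
    exact hvW'
  obtain ⟨p, hp, hplim⟩ := mem_closure_iff_seq_limit.mp hvcl
  have hpn : ∀ n, ∃ y : R.domain, ((y : H) = (e (p n)).1 ∧ R y = (e (p n)).2) ∧
      (e (p n)).2 ∈ R.domain := by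
    intro n
    have hmem := (hWmem (p n)).mp (hp n)
    rw [hP] at hmem
    rcases Submodule.mem_inf.mp hmem with ⟨h1, h2⟩
    rcases R.mem_graph_iff.mp h1 with ⟨y, hy1, hy2⟩
    exact ⟨y, ⟨hy1, hy2⟩, (Submodule.mem_prod.mp h2).2⟩
  choose u hu hud using hpn
  have hev : e v = ((h : H), R h) := e.apply_symm_apply _
  have l0 : Tendsto (fun n => e (p n)) atTop (𝓝 (e v)) := (e.continuous.tendsto v).comp hplim
  rw [hev] at l0
  have l1 : Tendsto (fun n => (e (p n)).1) atTop (𝓝 (h : H)) :=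
    (continuous_fst.tendsto _).comp l0
  have l2 : Tendsto (fun n => (e (p n)).2) atTop (𝓝 (R h)) :=
    (continuous_snd.tendsto _).comp l0
  refine ⟨u, fun n => ?_, ?_, ?_⟩
  · rw [(hu n).2]; exact hud n
  · simp only [fun n => (hu n).1]; exact l1
  · simp only [fun n => (hu n).2]; exact l2


/-- If a densely defined nonnegative form `t` satisfies `D₊ = D`, then `t` is closable and
the Friedrichs extension of the positive operator `Q*Q` equals `Q*Q**`, i.e. `Q*Q**` is
the largest positive self-adjoint extension of `Q*Q` in the form order. -/
theorem friedrichs_of_QstarQ (Q : H →ₗ.[𝕜] K) (t : NonnegForm 𝕜 Q.domain)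
    (hdense : Dense (Q.domain : Set H))
    (ht : ∀ g h : Q.domain, @inner 𝕜 K _ (Q g) (Q h) = t.toFun g h)
    (hran : Dense (Set.range fun x : Q.domain => Q x))
    (hplus : ∀ g : H, g ∈ Q.domain → g ∈ Dplus t) :
    FormClosable t ∧
    ∀ T0 TF : H →ₗ.[𝕜] H, IsPComp Q.adjoint Q T0 → IsPComp Q.adjoint Q.closure TF →
      IsSelfAdjoint TF ∧ IsPositivePMap TF ∧ T0 ≤ TF ∧
      ∀ S RS RF : H →ₗ.[𝕜] H, IsSelfAdjoint S → IsPositivePMap S → T0 ≤ S →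
        IsSqrtOf RS S → IsSqrtOf RF TF →
        (∀ h : H, h ∈ RF.domain → h ∈ RS.domain) ∧
        ∀ (h : H) (hF : h ∈ RF.domain) (hS : h ∈ RS.domain),
          ‖RS ⟨h, hS⟩‖ ^ 2 ≤ ‖RF ⟨h, hF⟩‖ ^ 2 := by
  -- Basic setup
  have hbound : ∀ g : Q.domain, ∃ C : ℝ, 0 ≤ C ∧
      ∀ h : Q.domain, ‖⟪Q g, Q h⟫‖ ≤ Real.sqrt C * ‖(h : H)‖ := by
    intro g
    obtain ⟨hg', C, hC0, hC⟩ := hplus (g : H) g.2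
    refine ⟨C, hC0, fun h => ?_⟩
    have hgg : (⟨(g : H), hg'⟩ : Q.domain) = g := rfl
    have h2 : ‖t.toFun g h‖ ^ 2 ≤ C * ‖(h : H)‖ ^ 2 := by rw [← hgg]; exact hC h
    have h3 : ‖⟪Q g, Q h⟫‖ = ‖t.toFun g h‖ := by rw [ht]
    rw [h3]
    have h4 : ‖t.toFun g h‖ = Real.sqrt (‖t.toFun g h‖ ^ 2) :=
      (Real.sqrt_sq (norm_nonneg _)).symm
    rw [h4]
    calc Real.sqrt (‖t.toFun g h‖ ^ 2) ≤ Real.sqrt (C * ‖(h : H)‖ ^ 2) :=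
          Real.sqrt_le_sqrt h2
      _ = Real.sqrt C * ‖(h : H)‖ := by
          rw [Real.sqrt_mul hC0, Real.sqrt_sq (norm_nonneg _)]
  have hranQ : ∀ g : Q.domain, Q g ∈ (Q†).domain := by
    intro g
    obtain ⟨C, hC0, hC⟩ := hbound g
    rw [mem_adjoint_domain_iff]
    apply AddMonoidHomClass.continuous_of_bound _ (Real.sqrt C)
    intro h
    exact hC h
  have hadj_dense : Dense (((Q†)).domain : Set K) := by
    apply hran.mono
    rintro _ ⟨x, rfl⟩
    exact hranQ x
  have hclosable : Q.IsClosable := my_isClosable Q hdense hadj_dense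
  have hQc : Q ≤ Q.closure := Q.le_closure
  have hQcval : ∀ g : Q.domain, Q.closure ⟨(g : H), hQc.1 g.2⟩ = Q g := fun g =>
    (hQc.2 (x := g) (y := ⟨(g : H), hQc.1 g.2⟩) rfl).symm
  constructor
  · -- FormClosable
    intro u hu0 hcauchy
    have hQdiff : ∀ n m : ℕ, RCLike.re (t.toFun (u n - u m) (u n - u m)) =
        ‖Q (u n) - Q (u m)‖ ^ 2 := by
      intro n m
      rw [← ht, Q.map_sub, @inner_self_eq_norm_sq 𝕜]
    have hQcauchy : CauchySeq fun n => Q (u n) := by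
      rw [Metric.cauchySeq_iff]
      intro ε hε
      obtain ⟨N, hN⟩ := hcauchy (ε ^ 2) (by positivity)
      refine ⟨N, fun m hm n hn => ?_⟩
      have := hN m hm n hn
      rw [hQdiff m n] at this
      rw [dist_eq_norm]
      exact lt_of_pow_lt_pow_left₀ 2 (le_of_lt hε) this
    obtain ⟨k, hk⟩ := cauchySeq_tendsto_of_complete hQcauchy
    have hzero : ∀ g : Q.domain, ⟪Q g, k⟫ = 0 := by
      intro g
      have l1 : Tendsto (fun n => ⟪Q g, Q (u n)⟫) atTop (𝓝 ⟪Q g, k⟫) :=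
        tendsto_const_nhds.inner hk
      have l2 : Tendsto (fun n => ⟪Q g, Q (u n)⟫) atTop (𝓝 0) := by
        obtain ⟨C, hC0, hC⟩ := hbound g
        apply squeeze_zero_norm (fun n => hC (u n))
        have hn : Tendsto (fun n => ‖((u n : H))‖) atTop (𝓝 0) := by
          have := hu0.norm
          rwa [norm_zero] at this
        have := hn.const_mul (Real.sqrt C)
        rwa [mul_zero] at this
      exact tendsto_nhds_unique l1 l2
    have hk0 : k = 0 := by
      have hfun : (fun y : K => ⟪y, k⟫) = fun _ => (0 : 𝕜) := by
        apply Continuous.ext_on hran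
        · exact continuous_id.inner continuous_const
        · exact continuous_const
        · rintro _ ⟨x, rfl⟩
          exact hzero x
      have := congrFun hfun k
      exact inner_self_eq_zero.mp this
    rw [hk0] at hk
    have hn : Tendsto (fun n => ‖Q (u n)‖ ^ 2) atTop (𝓝 0) := by
      have h1 := hk.norm
      rw [norm_zero] at h1
      have := h1.pow 2
      rwa [zero_pow (by norm_num : (2 : ℕ) ≠ 0)] at this
    have heq : ∀ n, RCLike.re (t.toFun (u n) (u n)) = ‖Q (u n)‖ ^ 2 := by
      intro n
      rw [← ht, @inner_self_eq_norm_sq 𝕜]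
    simpa only [heq] using hn
  · -- Friedrichs part
    intro T0 TF hT0 hTF
    have hDT0 : ∀ (x : H) (hx : x ∈ Q.domain), x ∈ T0.domain := fun x hx =>
      (hT0.1 x).mpr ⟨hx, hranQ ⟨x, hx⟩⟩
    have hDQC : ∀ (x : H) (hx : x ∈ Q.domain), x ∈ Q.closure.domain := fun x hx => hQc.1 hx
    have hDTF : ∀ (x : H) (hx : x ∈ Q.domain), x ∈ TF.domain := by
      intro x hx
      refine (hTF.1 x).mpr ⟨hDQC x hx, ?_⟩
      rw [hQcval ⟨x, hx⟩]
      exact hranQ ⟨x, hx⟩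
    have hTFdense : Dense (TF.domain : Set H) :=
      hdense.mono fun x hx => hDTF x hx
    -- the key inner product formula for TF
    have hTFinner : ∀ (x : H) (hxTF : x ∈ TF.domain) (hxQ : x ∈ Q.closure.domain)
        (y : Q.closure.domain),
        ⟪TF ⟨x, hxTF⟩, (y : H)⟫ = ⟪Q.closure ⟨x, hxQ⟩, Q.closure y⟫ := by
      intro x hxTF hxQ y
      obtain ⟨hx, hBx⟩ := (hTF.1 x).mp hxTF
      rw [hTF.2 x hxTF hx hBx]
      exact my_closure_formal Q hdense hclosable ⟨Q.closure ⟨x, hx⟩, hBx⟩ y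
    have hQCTF : ∀ (x : H), x ∈ TF.domain → x ∈ Q.closure.domain := by
      intro x hx
      obtain ⟨h1, _⟩ := (hTF.1 x).mp hx
      exact h1
    have hsym : ∀ x y : TF.domain, ⟪TF x, (y : H)⟫ = ⟪(x : H), TF y⟫ := by
      intro x y
      have hxQ := hQCTF _ x.2
      have hyQ := hQCTF _ y.2
      calc ⟪TF x, (y : H)⟫ = ⟪Q.closure ⟨(x : H), hxQ⟩, Q.closure ⟨(y : H), hyQ⟩⟫ :=
            hTFinner (x : H) x.2 hxQ ⟨(y : H), hyQ⟩
        _ = starRingEnd 𝕜 ⟪Q.closure ⟨(y : H), hyQ⟩, Q.closure ⟨(x : H), hxQ⟩⟫ :=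
            (inner_conj_symm _ _).symm
        _ = starRingEnd 𝕜 ⟪TF y, (x : H)⟫ := by rw [hTFinner (y : H) y.2 hyQ ⟨(x : H), hxQ⟩]
        _ = ⟪(x : H), TF y⟫ := inner_conj_symm _ _
    have hsurjTF : ∀ v : H, ∃ x : TF.domain, (x : H) + TF x = v := by
      intro v
      obtain ⟨x, hx, hQx, heq⟩ := my_vonNeumann Q hdense hclosable v
      have hxTF : x ∈ TF.domain := (hTF.1 x).mpr ⟨hx, hQx⟩
      refine ⟨⟨x, hxTF⟩, ?_⟩
      rw [hTF.2 x hxTF hx hQx]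
      exact heq
    have hTFsa : IsSelfAdjoint TF := my_selfadjoint_of_symm_surj TF hTFdense hsym hsurjTF
    have hTFpos : IsPositivePMap TF := by
      intro x
      have hxQ := hQCTF _ x.2
      have h1 : ⟪(x : H), TF x⟫ =
          starRingEnd 𝕜 ⟪Q.closure ⟨(x : H), hxQ⟩, Q.closure ⟨(x : H), hxQ⟩⟫ := by
        rw [← hTFinner (x : H) x.2 hxQ ⟨(x : H), hxQ⟩]
        exact (inner_conj_symm _ _).symm
      rw [h1, conj_re, @inner_self_eq_norm_sq 𝕜]
      positivity
    have hT0TF : T0 ≤ TF := by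
      refine ⟨fun x hx => ?_, ?_⟩
      · obtain ⟨h1, _⟩ := (hT0.1 x).mp hx
        exact hDTF x h1
      · intro a b hab
        obtain ⟨ha1, ha2⟩ := (hT0.1 (a : H)).mp a.2
        obtain ⟨hb1, hb2⟩ := (hTF.1 (b : H)).mp b.2
        rw [hT0.2 (a : H) a.2 ha1 ha2, hTF.2 (b : H) b.2 hb1 hb2]
        congr 1
        apply Subtype.ext
        show (Q ⟨(a : H), ha1⟩ : K) = Q.closure ⟨(b : H), hb1⟩
        have hab' : (⟨(a : H), ha1⟩ : Q.domain) = ⟨(b : H), hab ▸ ha1⟩ := Subtype.ext hab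
        rw [← hQcval ⟨(a : H), ha1⟩]
        congr 1
        exact Subtype.ext hab
    refine ⟨hTFsa, hTFpos, hT0TF, ?_⟩
    -- maximality
    intro S RS RF hSsa hSpos hT0S hRS hRF
    obtain ⟨hRSsa, hRSpos, hRScomp⟩ := hRS
    obtain ⟨hRFsa, hRFpos, hRFcomp⟩ := hRF
    have hQcval' : ∀ (gd : Q.domain) (hh : (gd : H) ∈ Q.closure.domain),
        Q.closure ⟨(gd : H), hh⟩ = Q gd := fun gd hh =>
      (hQc.2 (x := gd) (y := ⟨(gd : H), hh⟩) rfl).symm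
    have hsq : ∀ a b : ℝ, 0 ≤ a → 0 ≤ b → a ^ 2 = b ^ 2 → a = b := by
      intro a b ha hb hab
      have h1 : a = Real.sqrt (a ^ 2) := (Real.sqrt_sq ha).symm
      rw [h1, hab, Real.sqrt_sq hb]
    have hinner_adj : ∀ (d : Q.domain) (y : (Q†).domain),
        ⟪(d : H), Q† y⟫ = ⟪Q d, (y : K)⟫ := by
      intro d y
      calc ⟪(d : H), Q† y⟫ = starRingEnd 𝕜 ⟪Q† y, (d : H)⟫ := (inner_conj_symm _ _).symm
        _ = starRingEnd 𝕜 ⟪(y : K), Q d⟫ := by rw [adjoint_isFormalAdjoint hdense y d]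
        _ = ⟪Q d, (y : K)⟫ := inner_conj_symm _ _
    -- norm identity for RS on D
    have hSnormD : ∀ (d : Q.domain) (hdS : (d : H) ∈ S.domain) (hdRS : (d : H) ∈ RS.domain),
        ‖RS ⟨(d : H), hdRS⟩‖ = ‖Q d‖ := by
      intro d hdS hdRS
      obtain ⟨h1, h2⟩ := (hRScomp.1 (d : H)).mp hdS
      have hval : S ⟨(d : H), hdS⟩ = RS ⟨RS ⟨(d : H), h1⟩, h2⟩ := hRScomp.2 (d : H) hdS h1 h2
      have hsymm := my_symm hRSsa ⟨(d : H), h1⟩ ⟨RS ⟨(d : H), h1⟩, h2⟩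
      have hSd : S ⟨(d : H), hdS⟩ = T0 ⟨(d : H), hDT0 _ d.2⟩ :=
        (hT0S.2 (x := ⟨(d : H), hDT0 _ d.2⟩) (y := ⟨(d : H), hdS⟩) rfl).symm
      have hT0d : T0 ⟨(d : H), hDT0 _ d.2⟩ = Q† ⟨Q d, hranQ d⟩ :=
        hT0.2 (d : H) (hDT0 _ d.2) d.2 (hranQ d)
      have key : ⟪RS ⟨(d : H), h1⟩, RS ⟨(d : H), h1⟩⟫ = ⟪Q d, Q d⟫ := by
        calc ⟪RS ⟨(d : H), h1⟩, RS ⟨(d : H), h1⟩⟫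
            = ⟪(d : H), RS ⟨RS ⟨(d : H), h1⟩, h2⟩⟫ := hsymm
          _ = ⟪(d : H), S ⟨(d : H), hdS⟩⟫ := by rw [← hval]
          _ = ⟪(d : H), Q† ⟨Q d, hranQ d⟩⟫ := by rw [hSd, hT0d]
          _ = ⟪Q d, Q d⟫ := hinner_adj d ⟨Q d, hranQ d⟩
      apply hsq _ _ (norm_nonneg _) (norm_nonneg _)
      rw [← @inner_self_eq_norm_sq 𝕜, ← @inner_self_eq_norm_sq 𝕜]
      have hRSeq : RS ⟨(d : H), hdRS⟩ = RS ⟨(d : H), h1⟩ := rfl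
      rw [hRSeq, key]
    -- norm identity for RF on dom TF
    have hFnorm : ∀ (xx : H) (hxTF : xx ∈ TF.domain) (hxRF : xx ∈ RF.domain)
        (hxQ : xx ∈ Q.closure.domain),
        ‖RF ⟨xx, hxRF⟩‖ = ‖Q.closure ⟨xx, hxQ⟩‖ := by
      intro xx hxTF hxRF hxQ
      obtain ⟨h1, h2⟩ := (hRFcomp.1 xx).mp hxTF
      have hval : TF ⟨xx, hxTF⟩ = RF ⟨RF ⟨xx, h1⟩, h2⟩ := hRFcomp.2 xx hxTF h1 h2
      have hsymm := my_symm hRFsa ⟨xx, h1⟩ ⟨RF ⟨xx, h1⟩, h2⟩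
      have key : ⟪RF ⟨xx, h1⟩, RF ⟨xx, h1⟩⟫ = ⟪Q.closure ⟨xx, hxQ⟩, Q.closure ⟨xx, hxQ⟩⟫ := by
        calc ⟪RF ⟨xx, h1⟩, RF ⟨xx, h1⟩⟫
            = ⟪xx, RF ⟨RF ⟨xx, h1⟩, h2⟩⟫ := hsymm
          _ = ⟪xx, TF ⟨xx, hxTF⟩⟫ := by rw [← hval]
          _ = starRingEnd 𝕜 ⟪TF ⟨xx, hxTF⟩, xx⟫ := (inner_conj_symm _ _).symm
          _ = starRingEnd 𝕜 ⟪Q.closure ⟨xx, hxQ⟩, Q.closure ⟨xx, hxQ⟩⟫ := by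
              rw [hTFinner xx hxTF hxQ ⟨xx, hxQ⟩]
          _ = ⟪Q.closure ⟨xx, hxQ⟩, Q.closure ⟨xx, hxQ⟩⟫ := inner_self_conj _
      apply hsq _ _ (norm_nonneg _) (norm_nonneg _)
      rw [← @inner_self_eq_norm_sq 𝕜, ← @inner_self_eq_norm_sq 𝕜]
      have hRFeq : RF ⟨xx, hxRF⟩ = RF ⟨xx, h1⟩ := rfl
      rw [hRFeq, key]
    -- surjectivity of I + RF²
    have hRFclosed := my_selfAdjoint_graph_isClosed hRFsa
    have hcleq : RF.closure = RF :=
      my_closed_closure_eq hRFclosed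
    have hadjRF : RF† = RF := isSelfAdjoint_def.mp hRFsa
    have hsurjRF : ∀ v : H, ∃ (xx : H) (hx : xx ∈ RF.domain)
        (hRx : RF ⟨xx, hx⟩ ∈ RF.domain), xx + RF ⟨RF ⟨xx, hx⟩, hRx⟩ = v := by
      intro v
      obtain ⟨xx, hx, hQx, heq⟩ := my_vonNeumann RF hRFsa.dense_domain (LinearPMap.IsClosed.isClosable hRFclosed) v
      have hdomeq : RF.closure.domain = RF.domain := congrArg LinearPMap.domain hcleq
      have hx' : xx ∈ RF.domain := hdomeq ▸ hx
      have hval : RF.closure ⟨xx, hx⟩ = RF ⟨xx, hx'⟩ := my_apply_eq_of_eq hcleq hx hx'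
      have hadomeq : (RF†).domain = RF.domain := congrArg LinearPMap.domain hadjRF
      have hm : RF.closure ⟨xx, hx⟩ ∈ RF.domain := hadomeq ▸ hQx
      have hRx : RF ⟨xx, hx'⟩ ∈ RF.domain := by rw [← hval]; exact hm
      have e1 : RF† ⟨RF.closure ⟨xx, hx⟩, hQx⟩ = RF ⟨RF.closure ⟨xx, hx⟩, hm⟩ :=
        my_apply_eq_of_eq hadjRF hQx hm
      have e2 : RF ⟨RF.closure ⟨xx, hx⟩, hm⟩ = RF ⟨RF ⟨xx, hx'⟩, hRx⟩ := by
        congr 1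
        exact Subtype.ext hval
      refine ⟨xx, hx', hRx, ?_⟩
      rw [← e2, ← e1]
      exact heq
    -- approximation of closure elements by domain elements
    have happrox : ∀ (xq : Q.closure.domain) (ε : ℝ), 0 < ε → ∃ gg : Q.domain,
        ‖(gg : H) - (xq : H)‖ < ε ∧ ‖Q gg - Q.closure xq‖ < ε := by
      intro xq ε hε
      obtain ⟨u, hu1, hu2⟩ := my_closure_approx Q hclosable xq
      obtain ⟨N1, hN1⟩ := (Metric.tendsto_atTop.mp hu1) ε hε
      obtain ⟨N2, hN2⟩ := (Metric.tendsto_atTop.mp hu2) ε hε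
      refine ⟨u (max N1 N2), ?_, ?_⟩
      · have := hN1 _ (le_max_left N1 N2); rwa [dist_eq_norm] at this
      · have := hN2 _ (le_max_right N1 N2); rwa [dist_eq_norm] at this
    -- main claim
    have main : ∀ (h : H) (hF : h ∈ RF.domain), ∃ hS : h ∈ RS.domain,
        ‖RS ⟨h, hS⟩‖ = ‖RF ⟨h, hF⟩‖ := by
      intro h hF
      obtain ⟨x, hx2, hxlim, hxRlim⟩ := my_core_approx RF hRFsa hsurjRF ⟨h, hF⟩
      have hxTF : ∀ n, ((x n : H)) ∈ TF.domain := fun n => (hRFcomp.1 _).mpr ⟨(x n).2, hx2 n⟩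
      have hxQC : ∀ n, ((x n : H)) ∈ Q.closure.domain := fun n => hQCTF _ (hxTF n)
      have hgex : ∀ n : ℕ, ∃ gg : Q.domain, ‖(gg : H) - (x n : H)‖ < 1 / ((n : ℝ) + 1) ∧
          ‖Q gg - Q.closure ⟨(x n : H), hxQC n⟩‖ < 1 / ((n : ℝ) + 1) := fun n =>
        happrox ⟨(x n : H), hxQC n⟩ (1 / ((n : ℝ) + 1)) (by positivity)
      choose g hg1 hg2 using hgex
      have hgTF : ∀ n, ((g n : H)) ∈ TF.domain := fun n => hDTF _ (g n).2
      have hgRF : ∀ n, ((g n : H)) ∈ RF.domain := fun n =>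
        ((hRFcomp.1 _).mp (hgTF n)).choose
      have hdiffRF : ∀ n, ‖RF ⟨(g n : H), hgRF n⟩ - RF (x n)‖ < 1 / ((n : ℝ) + 1) := by
        intro n
        have hdTF : ((g n : H)) - ((x n : H)) ∈ TF.domain := sub_mem (hgTF n) (hxTF n)
        have hdRF : ((g n : H)) - ((x n : H)) ∈ RF.domain := sub_mem (hgRF n) (x n).2
        have hdQC : ((g n : H)) - ((x n : H)) ∈ Q.closure.domain :=
          sub_mem (hDQC _ (g n).2) (hxQC n)
        have hmap : RF ⟨(g n : H) - (x n : H), hdRF⟩ =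
            RF ⟨(g n : H), hgRF n⟩ - RF (x n) := by
          have h1 : (⟨(g n : H) - (x n : H), hdRF⟩ : RF.domain) =
              ⟨(g n : H), hgRF n⟩ - ⟨(x n : H), (x n).2⟩ := rfl
          rw [h1, RF.map_sub]
        have hnorm := hFnorm _ hdTF hdRF hdQC
        have hmap2 : Q.closure ⟨(g n : H) - (x n : H), hdQC⟩ =
            Q (g n) - Q.closure ⟨(x n : H), hxQC n⟩ := by
          have h1 : (⟨(g n : H) - (x n : H), hdQC⟩ : Q.closure.domain) =
              ⟨(g n : H), hDQC _ (g n).2⟩ - ⟨(x n : H), hxQC n⟩ := rfl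
          rw [h1, Q.closure.map_sub, hQcval' (g n) (hDQC _ (g n).2)]
        rw [← hmap, hnorm, hmap2]
        exact hg2 n
      have hRFg : Tendsto (fun n => RF ⟨(g n : H), hgRF n⟩) atTop (𝓝 (RF ⟨h, hF⟩)) := by
        have h0 : Tendsto (fun n => RF ⟨(g n : H), hgRF n⟩ - RF (x n)) atTop (𝓝 0) :=
          squeeze_zero_norm (fun n => le_of_lt (hdiffRF n))
            tendsto_one_div_add_atTop_nhds_zero_nat
        have h1 := h0.add hxRlim
        rw [zero_add] at h1
        simpa only [sub_add_cancel] using h1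
      have hgh : Tendsto (fun n => ((g n : H))) atTop (𝓝 h) := by
        have h0 : Tendsto (fun n => ((g n : H)) - ((x n : H))) atTop (𝓝 0) :=
          squeeze_zero_norm (fun n => le_of_lt (hg1 n))
            tendsto_one_div_add_atTop_nhds_zero_nat
        have h1 := h0.add hxlim
        rw [zero_add] at h1
        simpa only [sub_add_cancel] using h1
      have hQCx : ∀ n m : ℕ, ‖Q.closure ⟨(x n : H), hxQC n⟩ - Q.closure ⟨(x m : H), hxQC m⟩‖
          = ‖RF (x n) - RF (x m)‖ := by
        intro n m
        have hdTF : ((x n : H)) - ((x m : H)) ∈ TF.domain := sub_mem (hxTF n) (hxTF m)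
        have hdRF : ((x n : H)) - ((x m : H)) ∈ RF.domain := sub_mem (x n).2 (x m).2
        have hdQC : ((x n : H)) - ((x m : H)) ∈ Q.closure.domain :=
          sub_mem (hxQC n) (hxQC m)
        have e1 : Q.closure ⟨(x n : H) - (x m : H), hdQC⟩ =
            Q.closure ⟨(x n : H), hxQC n⟩ - Q.closure ⟨(x m : H), hxQC m⟩ := by
          have h1 : (⟨(x n : H) - (x m : H), hdQC⟩ : Q.closure.domain) =
              ⟨(x n : H), hxQC n⟩ - ⟨(x m : H), hxQC m⟩ := rfl
          rw [h1, Q.closure.map_sub]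
        have e2 : RF ⟨(x n : H) - (x m : H), hdRF⟩ = RF (x n) - RF (x m) := by
          have h1 : (⟨(x n : H) - (x m : H), hdRF⟩ : RF.domain) =
              ⟨(x n : H), (x n).2⟩ - ⟨(x m : H), (x m).2⟩ := rfl
          rw [h1, RF.map_sub]
        rw [← e1, ← e2]
        exact (hFnorm _ hdTF hdRF hdQC).symm
      have hQg_cauchy : CauchySeq fun n => Q (g n) := by
        have c1 : CauchySeq fun n => Q.closure ⟨(x n : H), hxQC n⟩ := by
          rw [Metric.cauchySeq_iff]
          intro ε hε
          obtain ⟨N, hN⟩ := Metric.cauchySeq_iff.mp hxRlim.cauchySeq ε hε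
          refine ⟨N, fun m hm n hn => ?_⟩
          rw [dist_eq_norm, hQCx m n, ← dist_eq_norm]
          exact hN m hm n hn
        have c2 : CauchySeq fun n => Q (g n) - Q.closure ⟨(x n : H), hxQC n⟩ :=
          (squeeze_zero_norm (fun n => le_of_lt (hg2 n))
            tendsto_one_div_add_atTop_nhds_zero_nat).cauchySeq
        have h3 := c2.add c1
        have h4 : ((fun n => Q (g n) - Q.closure ⟨(x n : H), hxQC n⟩) +
            fun n => Q.closure ⟨(x n : H), hxQC n⟩) = fun n => Q (g n) := by
          funext n
          simp [Pi.add_apply, sub_add_cancel]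
        rwa [h4] at h3
      have hgS : ∀ n, ((g n : H)) ∈ S.domain := fun n => hT0S.1 (hDT0 _ (g n).2)
      have hgRS : ∀ n, ((g n : H)) ∈ RS.domain := fun n =>
        ((hRScomp.1 _).mp (hgS n)).choose
      have hRSdiff : ∀ n m : ℕ, ‖RS ⟨(g n : H), hgRS n⟩ - RS ⟨(g m : H), hgRS m⟩‖
          = ‖Q (g n) - Q (g m)‖ := by
        intro n m
        have hdS : ((g n - g m : Q.domain) : H) ∈ S.domain :=
          hT0S.1 (hDT0 _ (g n - g m).2)
        have hdRS : ((g n - g m : Q.domain) : H) ∈ RS.domain :=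
          ((hRScomp.1 _).mp hdS).choose
        have e1 : RS ⟨((g n - g m : Q.domain) : H), hdRS⟩ =
            RS ⟨(g n : H), hgRS n⟩ - RS ⟨(g m : H), hgRS m⟩ := by
          have h1 : (⟨((g n - g m : Q.domain) : H), hdRS⟩ : RS.domain) =
              ⟨(g n : H), hgRS n⟩ - ⟨(g m : H), hgRS m⟩ := rfl
          rw [h1, RS.map_sub]
        have e2 : Q (g n - g m) = Q (g n) - Q (g m) := Q.map_sub _ _
        rw [← e1, ← e2]
        exact hSnormD (g n - g m) hdS hdRS
      have hRS_cauchy : CauchySeq fun n => RS ⟨(g n : H), hgRS n⟩ := by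
        rw [Metric.cauchySeq_iff] at hQg_cauchy ⊢
        intro ε hε
        obtain ⟨N, hN⟩ := hQg_cauchy ε hε
        refine ⟨N, fun m hm n hn => ?_⟩
        rw [dist_eq_norm, hRSdiff m n, ← dist_eq_norm]
        exact hN m hm n hn
      obtain ⟨z, hz⟩ := cauchySeq_tendsto_of_complete hRS_cauchy
      have hgraph : ((h, z) : H × H) ∈ RS.graph := by
        apply (my_selfAdjoint_graph_isClosed hRSsa).mem_of_tendsto (hgh.prodMk_nhds hz)
        exact Filter.Eventually.of_forall fun n => RS.mem_graph ⟨(g n : H), hgRS n⟩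
      rcases RS.mem_graph_iff.mp hgraph with ⟨y, hy1, hy2⟩
      have hy1' : (y : H) = h := hy1
      have hS0 : h ∈ RS.domain := hy1' ▸ y.2
      have hzval : RS ⟨h, hS0⟩ = z := by
        have hyy : (⟨h, hS0⟩ : RS.domain) = y := Subtype.ext hy1'.symm
        rw [hyy, hy2]
      have hnormg : ∀ n, ‖RS ⟨(g n : H), hgRS n⟩‖ = ‖RF ⟨(g n : H), hgRF n⟩‖ := by
        intro n
        rw [hSnormD (g n) (hgS n) (hgRS n),
          hFnorm _ (hgTF n) (hgRF n) (hDQC _ (g n).2), hQcval' (g n) (hDQC _ (g n).2)]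
      have l1 : Tendsto (fun n => ‖RS ⟨(g n : H), hgRS n⟩‖) atTop (𝓝 ‖z‖) := hz.norm
      have l2 : Tendsto (fun n => ‖RS ⟨(g n : H), hgRS n⟩‖) atTop (𝓝 ‖RF ⟨h, hF⟩‖) := by
        simp only [hnormg]
        exact hRFg.norm
      have hzn : ‖z‖ = ‖RF ⟨h, hF⟩‖ := tendsto_nhds_unique l1 l2
      exact ⟨hS0, by rw [hzval, hzn]⟩
    constructor
    · intro h hF
      exact (main h hF).choose
    · intro h hF hS
      obtain ⟨hS0, heq⟩ := main h hF
      have hre : RS ⟨h, hS⟩ = RS ⟨h, hS0⟩ := rfl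
      rw [hre, heq]
end
end

section
/- Let t be a closed nonnegative symmetric form with dense domain D in a real or complex Hilbert space. Then D = D₊ if and only if t is bounded (equivalently, D = H and there exists M ≥ 0 with |t(g,h)| ≤ M‖g‖‖h‖ for all g,h). -/
open Filter Topology RCLike
open scoped ComplexConjugate

noncomputable section

variable {𝕜 H K : Type*} [RCLike 𝕜] [NormedAddCommGroup H] [InnerProductSpace 𝕜 H]
  [NormedAddCommGroup K] [InnerProductSpace 𝕜 K] [CompleteSpace H] [CompleteSpace K]

/-!
Equip `D` with the energy inner product `t(y, x) + ⟪x, y⟫`; closedness of `t` says exactly that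
this is a Hilbert space, on which each `g ↦ t(g, h)` is a continuous functional. If `D = D₊`, the
normalised functionals `‖h‖⁻¹ t(·, h)` are pointwise bounded, so by Banach–Steinhaus
`|t(g, h)| ≤ M ‖g‖ₜ ‖h‖`, where `‖·‖ₜ` is the energy norm. Taking `h = g` gives
`‖g‖ₜ ≤ (M + 1) ‖g‖`, so `t` is bounded. Then `H`-Cauchy sequences in `D` are `t`-Cauchy, so
closedness of `t` makes `D` closed in `H`, and density gives `D = H`.
-/

namespace NonnegForm

variable {𝕜 E : Type*} [RCLike 𝕜] [NormedAddCommGroup E] [InnerProductSpace 𝕜 E]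
  {D : Submodule 𝕜 E} (t : NonnegForm 𝕜 D)

theorem add_right (x y z : D) : t.toFun x (y + z) = t.toFun x y + t.toFun x z := by
  rw [t.conj_symm x (y + z), t.add_left, map_add, ← t.conj_symm, ← t.conj_symm]

theorem smul_right (c : 𝕜) (x y : D) : t.toFun x (c • y) = conj c * t.toFun x y := by
  rw [t.conj_symm x (c • y), t.smul_left, map_mul, ← t.conj_symm]

theorem zero_right (x : D) : t.toFun x 0 = 0 := by
  simpa using t.smul_right 0 x 0

@[nolint unusedArguments]
def EnergySpace (_t : NonnegForm 𝕜 D) : Type _ := D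

instance : AddCommGroup t.EnergySpace := inferInstanceAs (AddCommGroup D)

instance : Module 𝕜 t.EnergySpace := inferInstanceAs (Module 𝕜 D)

def toEnergy : D ≃ₗ[𝕜] t.EnergySpace := LinearEquiv.refl 𝕜 D

-- The arguments of `t` are swapped because Mathlib's inner products are conjugate-linear in the
-- first argument, while `t` is linear in its first.
@[reducible]
def energyCore : InnerProductSpace.Core 𝕜 t.EnergySpace where
  inner x y := t.toFun (t.toEnergy.symm y) (t.toEnergy.symm x) +
    inner 𝕜 (t.toEnergy.symm x : E) (t.toEnergy.symm y)
  conj_inner_symm x y := by simp only [map_add, ← t.conj_symm, inner_conj_symm]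
  re_inner_nonneg x := by
    rw [map_add, inner_self_eq_norm_sq]
    exact add_nonneg (t.nonneg _) (sq_nonneg _)
  add_left x y z := by
    simp only [map_add, t.add_right, Submodule.coe_add, inner_add_left]
    ring
  smul_left x y c := by
    simp only [map_smul, t.smul_right, Submodule.coe_smul, inner_smul_left]
    ring
  definite x hx := by
    have hre := congrArg re hx
    rw [map_add, map_zero, inner_self_eq_norm_sq] at hre
    have : ‖(t.toEnergy.symm x : E)‖ ^ 2 = 0 := by
      linarith [t.nonneg (t.toEnergy.symm x), sq_nonneg ‖(t.toEnergy.symm x : E)‖]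
    simpa using this

instance : NormedAddCommGroup t.EnergySpace := t.energyCore.toNormedAddCommGroup

instance : InnerProductSpace 𝕜 t.EnergySpace := .ofCore t.energyCore.toCore

theorem inner_toEnergy (x y : D) :
    inner 𝕜 (t.toEnergy x) (t.toEnergy y) = t.toFun y x + inner 𝕜 (x : E) (y : E) :=
  rfl

theorem norm_toEnergy_sq (x : D) : ‖t.toEnergy x‖ ^ 2 = re (t.toFun x x) + ‖(x : E)‖ ^ 2 := by
  rw [← inner_self_eq_norm_sq (𝕜 := 𝕜), inner_toEnergy, map_add, inner_self_eq_norm_sq]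

theorem re_le_norm_toEnergy_sq (x : D) : re (t.toFun x x) ≤ ‖t.toEnergy x‖ ^ 2 := by
  rw [norm_toEnergy_sq]
  exact le_add_of_nonneg_right (sq_nonneg _)

theorem norm_coe_le_norm_toEnergy (x : D) : ‖(x : E)‖ ≤ ‖t.toEnergy x‖ := by
  refine (pow_le_pow_iff_left₀ (norm_nonneg _) (norm_nonneg _) two_ne_zero).1 ?_
  rw [norm_toEnergy_sq]
  exact le_add_of_nonneg_left (t.nonneg x)

theorem norm_toEnergy_le_of_re_le {M : ℝ} (x : D)
    (hx : re (t.toFun x x) ≤ M * ‖t.toEnergy x‖ * ‖(x : E)‖) :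
    ‖t.toEnergy x‖ ≤ (M + 1) * ‖(x : E)‖ := by
  have hsq := t.norm_toEnergy_sq x
  have hle := t.norm_coe_le_norm_toEnergy x
  rcases (norm_nonneg (t.toEnergy x)).eq_or_lt with h0 | hpos
  · have hx0 : ‖(x : E)‖ = 0 := le_antisymm (h0 ▸ hle) (norm_nonneg _)
    rw [← h0, hx0, mul_zero]
  · refine le_of_mul_le_mul_right ?_ hpos
    nlinarith [mul_le_mul_of_nonneg_left hle (norm_nonneg (x : E))]

def energyInclusion : t.EnergySpace →L[𝕜] E :=
  (D.subtype ∘ₗ t.toEnergy.symm.toLinearMap).mkContinuous 1 fun x => by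
    simpa using t.norm_coe_le_norm_toEnergy (t.toEnergy.symm x)

theorem energyInclusion_toEnergy (x : D) : t.energyInclusion (t.toEnergy x) = x :=
  rfl

def formFunctional (h : D) : t.EnergySpace →L[𝕜] 𝕜 :=
  innerSL 𝕜 (t.toEnergy h) - (innerSL 𝕜 (h : E)).comp t.energyInclusion

theorem formFunctional_toEnergy (h x : D) : t.formFunctional h (t.toEnergy x) = t.toFun x h := by
  simp [formFunctional, inner_toEnergy, energyInclusion_toEnergy]

end NonnegForm

section

variable {𝕜 E : Type*} [RCLike 𝕜] [NormedAddCommGroup E] [InnerProductSpace 𝕜 E]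
  {D : Submodule 𝕜 E} {t : NonnegForm 𝕜 D}

theorem mem_Dplus_iff {g : E} :
    g ∈ Dplus t ↔ ∃ hg : g ∈ D, ∃ C, 0 ≤ C ∧ ∀ h : D, ‖t.toFun ⟨g, hg⟩ h‖ ≤ C * ‖(h : E)‖ := by
  refine exists_congr fun hg => ⟨fun ⟨C, hC, hbound⟩ => ⟨√C, Real.sqrt_nonneg C, fun h => ?_⟩,
    fun ⟨C, hC, hbound⟩ => ⟨C ^ 2, sq_nonneg C, fun h => ?_⟩⟩
  · rw [← Real.sqrt_sq (norm_nonneg (h : E)), ← Real.sqrt_mul hC]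
    exact Real.le_sqrt_of_sq_le (hbound h)
  · rw [← mul_pow]
    exact pow_le_pow_left₀ (norm_nonneg _) (hbound h) 2

theorem FormClosed.exists_mem_of_tendsto (hclosed : FormClosed t) {u : ℕ → D} {g : E}
    (hu : Tendsto (fun n => (u n : E)) atTop (𝓝 g))
    (hcauchy : Tendsto (fun p : ℕ × ℕ => re (t.toFun (u p.1 - u p.2) (u p.1 - u p.2)))
      atTop (𝓝 0)) :
    ∃ hg : g ∈ D, Tendsto (fun n => re (t.toFun (u n - ⟨g, hg⟩) (u n - ⟨g, hg⟩))) atTop (𝓝 0) :=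
  hclosed u g hu fun _ hε => eventually_atTop_prod_self'.1 (hcauchy.eventually (gt_mem_nhds hε))

theorem FormClosed.completeSpace_energySpace [CompleteSpace E] (hclosed : FormClosed t) :
    CompleteSpace t.EnergySpace := by
  refine Metric.complete_of_cauchySeq_tendsto fun u hu => ?_
  obtain ⟨g, hg⟩ :=
    cauchySeq_tendsto_of_complete (t.energyInclusion.uniformContinuous.comp_cauchySeq hu)
  have hdist := cauchySeq_iff_tendsto_dist_atTop_0.1 hu
  obtain ⟨hgD, hform⟩ := hclosed.exists_mem_of_tendsto (u := fun n => t.toEnergy.symm (u n)) hg <|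
    squeeze_zero (fun _ => t.nonneg _) (fun p => by
      simpa [dist_eq_norm] using t.re_le_norm_toEnergy_sq (t.toEnergy.symm (u p.1 - u p.2)))
      (by simpa [dist_eq_norm] using hdist.pow 2)
  refine ⟨t.toEnergy ⟨g, hgD⟩, tendsto_iff_norm_sub_tendsto_zero.2 ?_⟩
  have hsplit : ∀ n, ‖u n - t.toEnergy ⟨g, hgD⟩‖ ^ 2 =
      re (t.toFun (t.toEnergy.symm (u n) - ⟨g, hgD⟩) (t.toEnergy.symm (u n) - ⟨g, hgD⟩)) +
        ‖t.energyInclusion (u n) - g‖ ^ 2 := fun n => by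
    rw [show u n - t.toEnergy ⟨g, hgD⟩ = t.toEnergy (t.toEnergy.symm (u n) - ⟨g, hgD⟩) by simp,
      t.norm_toEnergy_sq]
    rfl
  have hsq : Tendsto (fun n => ‖u n - t.toEnergy ⟨g, hgD⟩‖ ^ 2) atTop (𝓝 0) := by
    simpa only [hsplit, Function.comp_apply, zero_add, ne_eq, OfNat.ofNat_ne_zero,
      not_false_eq_true, zero_pow] using hform.add ((tendsto_iff_norm_sub_tendsto_zero.1 hg).pow 2)
  simpa using hsq.sqrt

theorem FormClosed.exists_bound_norm_toEnergy [CompleteSpace E] (hclosed : FormClosed t)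
    (hDplus : ∀ g : E, g ∈ D → g ∈ Dplus t) :
    ∃ M, 0 ≤ M ∧ ∀ x h : D, ‖t.toFun x h‖ ≤ M * ‖t.toEnergy x‖ * ‖(h : E)‖ := by
  have := hclosed.completeSpace_energySpace
  let f : D → t.EnergySpace →L[𝕜] 𝕜 := fun h => ((‖(h : E)‖⁻¹ : ℝ) : 𝕜) • t.formFunctional h
  have hf : ∀ x h : D, ‖f h (t.toEnergy x)‖ = ‖(h : E)‖⁻¹ * ‖t.toFun x h‖ := fun x h => by
    simp [f, t.formFunctional_toEnergy]
  obtain ⟨M, hM⟩ := banach_steinhaus (g := f) fun x => by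
    obtain ⟨y, rfl⟩ := t.toEnergy.surjective x
    obtain ⟨_, C, hC, hbound⟩ := mem_Dplus_iff.1 (hDplus y y.2)
    refine ⟨C, fun h => ?_⟩
    calc ‖f h (t.toEnergy y)‖ ≤ ‖(h : E)‖⁻¹ * (C * ‖(h : E)‖) := by
          rw [hf]; gcongr; exact hbound h
      _ = C * (‖(h : E)‖⁻¹ * ‖(h : E)‖) := by ring
      _ ≤ C := mul_le_of_le_one_right hC (inv_mul_le_one_of_le₀ le_rfl (norm_nonneg _))
  refine ⟨M, (norm_nonneg _).trans (hM 0), fun x h => ?_⟩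
  rcases eq_or_ne h 0 with rfl | hh
  · simp [t.zero_right]
  have hpos : 0 < ‖(h : E)‖ := by simpa using hh
  calc ‖t.toFun x h‖ = ‖(h : E)‖ * ‖f h (t.toEnergy x)‖ := by
        rw [hf, mul_inv_cancel_left₀ hpos.ne']
    _ ≤ ‖(h : E)‖ * (M * ‖t.toEnergy x‖) := by gcongr; exact (f h).le_of_opNorm_le (hM h) _
    _ = M * ‖t.toEnergy x‖ * ‖(h : E)‖ := by ring

theorem FormClosed.exists_bound_of_forall_mem_Dplus [CompleteSpace E] (hclosed : FormClosed t)
    (hDplus : ∀ g : E, g ∈ D → g ∈ Dplus t) :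
    ∃ M, 0 ≤ M ∧ ∀ g h : D, ‖t.toFun g h‖ ≤ M * ‖(g : E)‖ * ‖(h : E)‖ := by
  obtain ⟨M, hM, hbound⟩ := hclosed.exists_bound_norm_toEnergy hDplus
  refine ⟨M * (M + 1), by positivity, fun g h => ?_⟩
  have hg := t.norm_toEnergy_le_of_re_le g ((re_le_norm _).trans (hbound g g))
  calc ‖t.toFun g h‖ ≤ M * ‖t.toEnergy g‖ * ‖(h : E)‖ := hbound g h
    _ ≤ M * ((M + 1) * ‖(g : E)‖) * ‖(h : E)‖ := by gcongr
    _ = M * (M + 1) * ‖(g : E)‖ * ‖(h : E)‖ := by ring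

theorem FormClosed.isClosed_of_bound (hclosed : FormClosed t) {M : ℝ}
    (hbound : ∀ g h : D, ‖t.toFun g h‖ ≤ M * ‖(g : E)‖ * ‖(h : E)‖) : IsClosed (D : Set E) := by
  refine IsSeqClosed.isClosed fun u p hu hup => ?_
  let v : ℕ → D := fun n => ⟨u n, hu n⟩
  have hdist := cauchySeq_iff_tendsto_dist_atTop_0.1 hup.cauchySeq
  refine (hclosed.exists_mem_of_tendsto (u := v) hup <| squeeze_zero (fun _ => t.nonneg _)
    (fun q => ?_) (by simpa using (hdist.pow 2).const_mul M)).1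
  calc re (t.toFun (v q.1 - v q.2) (v q.1 - v q.2)) ≤ ‖t.toFun (v q.1 - v q.2) (v q.1 - v q.2)‖ :=
        re_le_norm _
    _ ≤ M * ‖u q.1 - u q.2‖ * ‖u q.1 - u q.2‖ := hbound _ _
    _ = M * dist (u q.1) (u q.2) ^ 2 := by rw [dist_eq_norm]; ring

end

/-- For a closed densely defined nonnegative form `t`: `D = D₊` iff `t` is bounded
(i.e. `D = H` and `|t(g,h)| ≤ M‖g‖‖h‖` for some `M ≥ 0`). -/
theorem closed_form_Dplus_eq_iff_bounded {D : Submodule 𝕜 H} (hD : Dense (D : Set H))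
    (t : NonnegForm 𝕜 D) (hclosed : FormClosed t) :
    (∀ g : H, g ∈ D → g ∈ Dplus t) ↔
      (D = ⊤ ∧ ∃ M : ℝ, 0 ≤ M ∧ ∀ g h : D, ‖t.toFun g h‖ ≤ M * ‖(g : H)‖ * ‖(h : H)‖) := by
  constructor
  · intro hDplus
    obtain ⟨M, hM, hbound⟩ := hclosed.exists_bound_of_forall_mem_Dplus hDplus
    refine ⟨Submodule.coe_eq_univ.1 ?_, M, hM, hbound⟩
    rw [← (hclosed.isClosed_of_bound hbound).closure_eq, hD.closure_eq]
  · rintro ⟨-, M, hM, hbound⟩ g hg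
    exact mem_Dplus_iff.2 ⟨hg, M * ‖g‖, by positivity, hbound ⟨g, hg⟩⟩
end
end

section
/- Let Q be a closed densely defined operator between Hilbert spaces with dom Q = dom Q*Q. Then dom Q* is the whole codomain space and Q* (hence Q) is bounded. -/
open Filter Topology RCLike
open scoped ComplexConjugate

noncomputable section

variable {𝕜 H K : Type*} [RCLike 𝕜] [NormedAddCommGroup H] [InnerProductSpace 𝕜 H]
  [NormedAddCommGroup K] [InnerProductSpace 𝕜 K] [CompleteSpace H] [CompleteSpace K]

/-!
Since `Q` maps its domain into `dom Q*`, the operator `Q* Q` is defined on the whole graph of `Q`,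
which is complete because `Q` is closed. Its graph is closed, since `⟪Q* Q g, v⟫ = ⟪g₂, Q v⟫` is
continuous in `g` for every `v` in the dense set `dom Q`; by the closed graph theorem `Q* Q` is
bounded. Then `‖Q x‖² = ⟪Q* Q x, x⟫ ≤ C (‖x‖ + ‖Q x‖) ‖x‖` bounds `Q`, and the adjoint of a bounded
densely defined operator is everywhere defined and bounded.
-/
open scoped InnerProductSpace

theorem le_add_one_mul_of_sq_le {a b C : ℝ} (hb : 0 ≤ b) (hC : 0 ≤ C)
    (h : a ^ 2 ≤ C * (b + a) * b) : a ≤ (C + 1) * b := by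
  nlinarith [mul_nonneg hC hb, sq_nonneg (a - (C + 1) * b)]

section InnerProduct

variable {E : Type*} [NormedAddCommGroup E] [InnerProductSpace 𝕜 E]

theorem Dense.norm_le_of_norm_inner_le {s : Set E} (hs : Dense s) {w : E} {M : ℝ} (hM : 0 ≤ M)
    (h : ∀ v ∈ s, ‖⟪w, v⟫_𝕜‖ ≤ M * ‖v‖) : ‖w‖ ≤ M := by
  have hall : ∀ v, ‖⟪w, v⟫_𝕜‖ ≤ M * ‖v‖ :=
    hs.induction h (isClosed_le (by fun_prop) (by fun_prop))
  rw [← innerSL_apply_norm 𝕜 w]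
  exact ContinuousLinearMap.opNorm_le_bound _ hM hall

theorem LinearMap.continuous_of_dense_continuous_inner {V : Type*} [NormedAddCommGroup V]
    [NormedSpace 𝕜 V] [CompleteSpace V] [CompleteSpace E] (f : V →ₗ[𝕜] E) {s : Set E}
    (hs : Dense s) (hf : ∀ v ∈ s, Continuous fun x => ⟪f x, v⟫_𝕜) : Continuous f := by
  refine f.continuous_of_seq_closed_graph fun u x y hux hfuy => ?_
  refine hs.eq_of_inner_left 𝕜 fun v hv => ?_
  exact tendsto_nhds_unique (hfuy.inner tendsto_const_nhds) (((hf v hv).tendsto x).comp hux)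

end InnerProduct

namespace LinearPMap

variable {E F : Type*} [NormedAddCommGroup E] [InnerProductSpace 𝕜 E] [NormedAddCommGroup F]
  [InnerProductSpace 𝕜 F] [CompleteSpace E] {Q : E →ₗ.[𝕜] F}

theorem adjoint_domain_eq_top_of_bound {c : ℝ}
    (hQ : ∀ x : Q.domain, ‖Q x‖ ≤ c * ‖(x : E)‖) : Q†.domain = ⊤ := by
  refine Submodule.eq_top_iff'.mpr fun y => (Q.mem_adjoint_domain_iff y).mpr ?_
  refine AddMonoidHomClass.continuous_of_bound _ (‖y‖ * c) fun x => ?_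
  calc ‖⟪y, Q x⟫_𝕜‖ ≤ ‖y‖ * ‖Q x‖ := norm_inner_le_norm _ _
    _ ≤ ‖y‖ * c * ‖(x : E)‖ := by
      rw [mul_assoc]; exact mul_le_mul_of_nonneg_left (hQ x) (norm_nonneg _)

theorem norm_adjoint_apply_le (hdense : Dense (Q.domain : Set E)) {c : ℝ} (hc : 0 ≤ c)
    (hQ : ∀ x : Q.domain, ‖Q x‖ ≤ c * ‖(x : E)‖) (y : Q†.domain) :
    ‖Q† y‖ ≤ c * ‖(y : F)‖ := by
  refine hdense.norm_le_of_norm_inner_le (𝕜 := 𝕜) (by positivity) fun v hv => ?_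
  calc ‖⟪Q† y, v⟫_𝕜‖ = ‖⟪(y : F), Q ⟨v, hv⟩⟫_𝕜‖ := by
        rw [adjoint_isFormalAdjoint hdense y ⟨v, hv⟩]
    _ ≤ ‖(y : F)‖ * ‖Q ⟨v, hv⟩‖ := norm_inner_le_norm _ _
    _ ≤ c * ‖(y : F)‖ * ‖v‖ := by
      rw [mul_comm c, mul_assoc]; exact mul_le_mul_of_nonneg_left (hQ _) (norm_nonneg _)

theorem snd_mem_adjoint_domain_of_mem_graph (hdom : ∀ x : Q.domain, Q x ∈ Q†.domain)
    (g : Q.graph) : (g : E × F).2 ∈ Q†.domain := by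
  obtain ⟨x, -, hx⟩ := Q.mem_graph_iff.mp g.2
  exact hx ▸ hdom x

variable (Q) in
/-- The operator `Q* Q`, viewed as an everywhere defined map on the graph of `Q`. -/
def adjointCompOnGraph (hdom : ∀ x : Q.domain, Q x ∈ Q†.domain) : Q.graph →ₗ[𝕜] E :=
  Q†.toFun ∘ₗ (LinearMap.snd 𝕜 E F ∘ₗ Q.graph.subtype).codRestrict Q†.domain
    (snd_mem_adjoint_domain_of_mem_graph hdom)

theorem inner_adjointCompOnGraph (hdense : Dense (Q.domain : Set E))
    (hdom : ∀ x : Q.domain, Q x ∈ Q†.domain) (g : Q.graph) (x : Q.domain) :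
    ⟪Q.adjointCompOnGraph hdom g, (x : E)⟫_𝕜 = ⟪(g : E × F).2, Q x⟫_𝕜 :=
  adjoint_isFormalAdjoint hdense ⟨_, snd_mem_adjoint_domain_of_mem_graph hdom g⟩ x

theorem continuous_adjointCompOnGraph [CompleteSpace F] (hdense : Dense (Q.domain : Set E))
    (hclosed : Q.IsClosed) (hdom : ∀ x : Q.domain, Q x ∈ Q†.domain) :
    Continuous (Q.adjointCompOnGraph hdom) := by
  have : CompleteSpace Q.graph := IsClosed.completeSpace_coe (hs := hclosed)
  refine LinearMap.continuous_of_dense_continuous_inner _ hdense fun v hv => ?_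
  simp_rw [inner_adjointCompOnGraph hdense hdom _ ⟨v, hv⟩]
  fun_prop

theorem exists_bound_of_map_mem_adjoint_domain [CompleteSpace F]
    (hdense : Dense (Q.domain : Set E)) (hclosed : Q.IsClosed)
    (hdom : ∀ x : Q.domain, Q x ∈ Q†.domain) :
    ∃ c, 0 ≤ c ∧ ∀ x : Q.domain, ‖Q x‖ ≤ c * ‖(x : E)‖ := by
  obtain ⟨C, hC, hAC⟩ := SemilinearMapClass.bound_of_continuous _
    (continuous_adjointCompOnGraph hdense hclosed hdom)
  refine ⟨C + 1, by positivity, fun x => ?_⟩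
  let g : Q.graph := ⟨((x : E), Q x), Q.mem_graph x⟩
  have hg : ‖g‖ ≤ ‖(x : E)‖ + ‖Q x‖ := max_le_add_of_nonneg (norm_nonneg _) (norm_nonneg _)
  have hsq : ‖Q x‖ ^ 2 ≤ C * (‖(x : E)‖ + ‖Q x‖) * ‖(x : E)‖ :=
    calc ‖Q x‖ ^ 2 = ‖⟪Q x, Q x⟫_𝕜‖ := by rw [inner_self_eq_norm_sq_to_K]; simp
      _ = ‖⟪Q.adjointCompOnGraph hdom g, (x : E)⟫_𝕜‖ := by
          rw [inner_adjointCompOnGraph hdense hdom]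
      _ ≤ ‖Q.adjointCompOnGraph hdom g‖ * ‖(x : E)‖ := norm_inner_le_norm _ _
      _ ≤ C * (‖(x : E)‖ + ‖Q x‖) * ‖(x : E)‖ := by
        gcongr; exact (hAC g).trans (mul_le_mul_of_nonneg_left hg hC.le)
  exact le_add_one_mul_of_sq_le (norm_nonneg _) hC.le hsq

end LinearPMap

/-- If `Q` is a closed densely defined operator with `dom Q = dom Q*Q`, then
`dom Q*` is the whole codomain space and `Q*` (hence `Q`) is bounded. -/
theorem closed_operator_with_full_composition_domain (Q : H →ₗ.[𝕜] K)
    (hdense : Dense (Q.domain : Set H)) (hclosed : Q.IsClosed)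
    (hdom : ∀ (x : H) (hx : x ∈ Q.domain), Q ⟨x, hx⟩ ∈ Q.adjoint.domain) :
    Q.adjoint.domain = ⊤ ∧
    (∃ C : ℝ, ∀ y : Q.adjoint.domain, ‖Q.adjoint y‖ ≤ C * ‖(y : K)‖) ∧
    (∃ C : ℝ, ∀ x : Q.domain, ‖Q x‖ ≤ C * ‖(x : H)‖) := by
  obtain ⟨c, hc, hQ⟩ :=
    LinearPMap.exists_bound_of_map_mem_adjoint_domain hdense hclosed fun x => hdom x x.2
  exact ⟨LinearPMap.adjoint_domain_eq_top_of_bound hQ,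
    ⟨c, LinearPMap.norm_adjoint_apply_le hdense hc hQ⟩, ⟨c, hQ⟩⟩
end
end
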